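/- arXiv:2012.07705 — 2 statements merged into one kernel-verified Lean document; each statement's English description precedes it below -/
import Mathlib

section
/- Let (x, t) ∈ ℝ^d × [0, T) satisfy V(x, t) < ψ(x, t). Then there exists t₀ = t₀(x, t) > 0 such that for every ζ ∈ [t, t + t₀], V(x, t) = inf over α ∈ 𝒜 of [∫_t^ζ e^{−λ(s−t)} ℓ(y_{(x,t)}(s;α), α(s), s) ds + e^{−λ(ζ−t)} V(y_{(x,t)}(ζ;α), ζ)]. -/
/-!
Near `(x, t)` the discounted obstacle `e^{-λ(s-t)} ψ(y, s)` stays above `u = (V(x,t) + ψ(x,t))/2`,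
and trajectories move at speed at most `M`; so for `ζ` close to `t`, stopping before `ζ` costs
at least `u > V(x,t)` and nearly optimal strategies stop after `ζ`. For those, splitting the cost
at `ζ` (the flow property, from Grönwall uniqueness of trajectories) gives `inf ≤ V(x,t)`;
conversely, concatenating a control with a nearly optimal one from `(y(ζ), ζ)` gives
`V(x,t) ≤ inf`.
-/

open Set MeasureTheory intervalIntegral RealInnerProductSpace

noncomputable section

/-- The set of admissible (measurable, `A`-valued) controls. -/
def Ctrl {m : ℕ} (A : Set (EuclideanSpace ℝ (Fin m))) : Set (ℝ → EuclideanSpace ℝ (Fin m)) :=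
  {α | Measurable α ∧ ∀ s, α s ∈ A}

/-- The cost functional of the time-dependent optimal stopping problem:
`J(x,t,α,τ) = ∫_t^τ e^{−λ(s−t)} ℓ(y(s),α(s),s) ds + e^{−λ(τ−t)} ψ(y(τ),τ)`,
where `Y x t α` denotes the trajectory of `y' = f(y,α)`, `y(t)=x`. -/
def costJ {d m : ℕ}
    (ℓ : EuclideanSpace ℝ (Fin d) → EuclideanSpace ℝ (Fin m) → ℝ → ℝ)
    (ψ : EuclideanSpace ℝ (Fin d) → ℝ → ℝ) (lam : ℝ)
    (Y : EuclideanSpace ℝ (Fin d) → ℝ → (ℝ → EuclideanSpace ℝ (Fin m)) → ℝ →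
      EuclideanSpace ℝ (Fin d))
    (x : EuclideanSpace ℝ (Fin d)) (t : ℝ) (α : ℝ → EuclideanSpace ℝ (Fin m)) (τ : ℝ) : ℝ :=
  (∫ s in t..τ, Real.exp (-lam * (s - t)) * ℓ (Y x t α s) (α s) s)
    + Real.exp (-lam * (τ - t)) * ψ (Y x t α τ) τ

/-- The Hamiltonian `H(x,t,ξ) = sup_{a ∈ A} {−f(x,a)·ξ − ℓ(x,a,t)}`. -/
def Ham {d m : ℕ} (A : Set (EuclideanSpace ℝ (Fin m)))
    (f : EuclideanSpace ℝ (Fin d) → EuclideanSpace ℝ (Fin m) → EuclideanSpace ℝ (Fin d))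
    (ℓ : EuclideanSpace ℝ (Fin d) → EuclideanSpace ℝ (Fin m) → ℝ → ℝ)
    (x : EuclideanSpace ℝ (Fin d)) (t : ℝ) (ξ : EuclideanSpace ℝ (Fin d)) : ℝ :=
  sSup ((fun a => -⟪f x a, ξ⟫ - ℓ x a t) '' A)

/-- `u` is bounded and uniformly continuous on `ℝ^d × [0,T]`. -/
def BUCOn {d : ℕ} (u : EuclideanSpace ℝ (Fin d) → ℝ → ℝ) (T : ℝ) : Prop :=
  (∃ K, ∀ x t, t ∈ Icc (0 : ℝ) T → |u x t| ≤ K) ∧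
    UniformContinuousOn (fun q : EuclideanSpace ℝ (Fin d) × ℝ => u q.1 q.2)
      (univ ×ˢ Icc (0 : ℝ) T)

/-- Viscosity subsolution of `−u_t + λu + H(x,t,D_x u) = 0` on a set `S` (via `C¹` test
functions touching `u` from above). -/
def SubSolOn {d : ℕ} (S : Set (EuclideanSpace ℝ (Fin d) × ℝ)) (lam : ℝ)
    (H : EuclideanSpace ℝ (Fin d) → ℝ → EuclideanSpace ℝ (Fin d) → ℝ)
    (u : EuclideanSpace ℝ (Fin d) → ℝ → ℝ) : Prop :=
  ∀ φ : EuclideanSpace ℝ (Fin d) × ℝ → ℝ, ContDiff ℝ 1 φ →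
    ∀ x t, (x, t) ∈ S →
      IsLocalMaxOn (fun q : EuclideanSpace ℝ (Fin d) × ℝ => u q.1 q.2 - φ q) S (x, t) →
      -(deriv (fun s => φ (x, s)) t) + lam * u x t
          + H x t (gradient (fun z => φ (z, t)) x) ≤ 0

/-- Viscosity supersolution of `−u_t + λu + H(x,t,D_x u) = 0` on a set `S`. -/
def SuperSolOn {d : ℕ} (S : Set (EuclideanSpace ℝ (Fin d) × ℝ)) (lam : ℝ)
    (H : EuclideanSpace ℝ (Fin d) → ℝ → EuclideanSpace ℝ (Fin d) → ℝ)
    (u : EuclideanSpace ℝ (Fin d) → ℝ → ℝ) : Prop :=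
  ∀ φ : EuclideanSpace ℝ (Fin d) × ℝ → ℝ, ContDiff ℝ 1 φ →
    ∀ x t, (x, t) ∈ S →
      IsLocalMinOn (fun q : EuclideanSpace ℝ (Fin d) × ℝ => u q.1 q.2 - φ q) S (x, t) →
      0 ≤ -(deriv (fun s => φ (x, s)) t) + lam * u x t
          + H x t (gradient (fun z => φ (z, t)) x)

/-- Viscosity subsolution of the obstacle problem
`max{u − ψ, −u_t + λu + H(x,t,D_x u)} = 0` on `ℝ^d × [0,T)`. -/
def ObSubSol {d : ℕ} (T lam : ℝ)
    (ψ : EuclideanSpace ℝ (Fin d) → ℝ → ℝ)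
    (H : EuclideanSpace ℝ (Fin d) → ℝ → EuclideanSpace ℝ (Fin d) → ℝ)
    (u : EuclideanSpace ℝ (Fin d) → ℝ → ℝ) : Prop :=
  ∀ φ : EuclideanSpace ℝ (Fin d) × ℝ → ℝ, ContDiff ℝ 1 φ →
    ∀ x t, t ∈ Ico (0 : ℝ) T →
      IsLocalMaxOn (fun q : EuclideanSpace ℝ (Fin d) × ℝ => u q.1 q.2 - φ q)
        (univ ×ˢ Ico (0 : ℝ) T) (x, t) →
      max (u x t - ψ x t)
        (-(deriv (fun s => φ (x, s)) t) + lam * u x t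
          + H x t (gradient (fun z => φ (z, t)) x)) ≤ 0

/-- Viscosity supersolution of the obstacle problem
`max{u − ψ, −u_t + λu + H(x,t,D_x u)} = 0` on `ℝ^d × [0,T)`. -/
def ObSuperSol {d : ℕ} (T lam : ℝ)
    (ψ : EuclideanSpace ℝ (Fin d) → ℝ → ℝ)
    (H : EuclideanSpace ℝ (Fin d) → ℝ → EuclideanSpace ℝ (Fin d) → ℝ)
    (u : EuclideanSpace ℝ (Fin d) → ℝ → ℝ) : Prop :=
  ∀ φ : EuclideanSpace ℝ (Fin d) × ℝ → ℝ, ContDiff ℝ 1 φ →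
    ∀ x t, t ∈ Ico (0 : ℝ) T →
      IsLocalMinOn (fun q : EuclideanSpace ℝ (Fin d) × ℝ => u q.1 q.2 - φ q)
        (univ ×ˢ Ico (0 : ℝ) T) (x, t) →
      0 ≤ max (u x t - ψ x t)
        (-(deriv (fun s => φ (x, s)) t) + lam * u x t
          + H x t (gradient (fun z => φ (z, t)) x))

/-- Viscosity solution of the obstacle problem with terminal condition `u(·,T) = ψ(·,T)`. -/
def ObSolution {d : ℕ} (T lam : ℝ)
    (ψ : EuclideanSpace ℝ (Fin d) → ℝ → ℝ)
    (H : EuclideanSpace ℝ (Fin d) → ℝ → EuclideanSpace ℝ (Fin d) → ℝ)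
    (u : EuclideanSpace ℝ (Fin d) → ℝ → ℝ) : Prop :=
  ObSubSol T lam ψ H u ∧ ObSuperSol T lam ψ H u ∧ ∀ x, u x T = ψ x T

theorem le_csInf_of_forall_lt {α : Type*} [ConditionallyCompleteLinearOrder α] {S : Set α}
    (hS : S.Nonempty) {b u : α} (hu : sInf S < u) (h : ∀ c ∈ S, c < u → b ≤ c) :
    b ≤ sInf S := by
  by_contra! hlt
  obtain ⟨c, hc, hcu⟩ := exists_lt_of_csInf_lt hS (lt_min hlt hu)
  exact (lt_min_iff.1 hcu).1.not_ge (h c hc (lt_min_iff.1 hcu).2)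

theorem continuousOn_Icc_of_eq_add_integral {E : Type*} [NormedAddCommGroup E] [NormedSpace ℝ E]
    {Z g : ℝ → E} {x : E} {a b : ℝ} (hg : IntegrableOn g (Icc a b))
    (hZ : ∀ s ∈ Icc a b, Z s = x + ∫ r in a..s, g r) : ContinuousOn Z (Icc a b) := by
  rcases lt_or_ge b a with hba | hab
  · simp [Icc_eq_empty_of_lt hba]
  have := continuousOn_const (c := x) |>.add (intervalIntegral.continuousOn_primitive_interval
    (μ := volume) (by rwa [uIcc_of_le hab]))
  rw [uIcc_of_le hab] at this
  exact this.congr hZ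

theorem eq_zero_of_le_mul_integral {h : ℝ → ℝ} {K a b : ℝ} (hc : ContinuousOn h (Icc a b))
    (h0 : ∀ s ∈ Icc a b, 0 ≤ h s) (hle : ∀ s ∈ Icc a b, h s ≤ K * ∫ r in a..s, h r) :
    ∀ s ∈ Icc a b, h s = 0 := by
  rcases lt_or_ge b a with hba | hab
  · simp [Icc_eq_empty_of_lt hba]
  set φ : ℝ → ℝ := fun s => ∫ r in a..s, h r
  have hφc : ContinuousOn φ (Icc a b) :=
    continuousOn_Icc_of_eq_add_integral (x := 0) hc.integrableOn_Icc fun s _ => (zero_add _).symm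
  have hφ0 : ∀ s ∈ Icc a b, 0 ≤ φ s := fun s hs =>
    intervalIntegral.integral_nonneg hs.1 fun r hr => h0 r ⟨hr.1, hr.2.trans hs.2⟩
  have hφd : ∀ s ∈ Ico a b, HasDerivWithinAt φ (h s) (Ici s) s := fun s hs =>
    intervalIntegral.integral_hasDerivWithinAt_right
      ((hc.mono (Icc_subset_Icc_right hs.2.le)).intervalIntegrable_of_Icc hs.1)
      ((hc.stronglyMeasurableAtFilter_nhdsWithin measurableSet_Icc s).filter_mono
        (nhdsWithin_le_of_mem (Icc_mem_nhdsGT_of_mem hs)))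
      ((hc s (Ico_subset_Icc_self hs)).mono_of_mem_nhdsWithin (Icc_mem_nhdsGT_of_mem hs))
  have hφ : ∀ s ∈ Icc a b, φ s = 0 :=
    eq_zero_of_abs_deriv_le_mul_abs_self_of_eq_zero_right hφc hφd (by simp [φ]) fun s hs => by
      rw [Real.norm_of_nonneg (h0 s (Ico_subset_Icc_self hs)),
        Real.norm_of_nonneg (hφ0 s (Ico_subset_Icc_self hs))]
      exact hle s (Ico_subset_Icc_self hs)
  intro s hs
  exact le_antisymm (by simpa [φ, hφ s hs] using hle s hs) (h0 s hs)

section Trajectory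

variable {E F : Type*} [NormedAddCommGroup E] [NormedSpace ℝ E]
  {f : E → F → E} {α β γ : ℝ → F} {x : E} {t : ℝ} {Z W : ℝ → E}

def IsTrajectory (f : E → F → E) (α : ℝ → F) (x : E) (t : ℝ) (Z : ℝ → E) : Prop :=
  ∀ s, Z s = x + ∫ r in t..s, f (Z r) (α r)

theorem IsTrajectory.dist_le {M : ℝ} (hM : ∀ z a, ‖f z a‖ ≤ M) (hZ : IsTrajectory f α x t Z)
    {s : ℝ} (hts : t ≤ s) : dist (Z s) x ≤ M * (s - t) := by
  rw [dist_eq_norm, hZ s, add_sub_cancel_left, ← abs_of_nonneg (sub_nonneg.2 hts)]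
  exact intervalIntegral.norm_integral_le_of_norm_le_const fun r _ => hM _ _

theorem eqOn_Icc_of_eq_add_integral {A : Set F} {L b : ℝ}
    (hfL : ∀ y z a, a ∈ A → ‖f y a - f z a‖ ≤ L * ‖y - z‖) (hβA : ∀ r, β r ∈ A)
    (hβγ : EqOn β γ (Ioo t b))
    (hZi : IntegrableOn (fun r => f (Z r) (β r)) (Icc t b))
    (hWi : IntegrableOn (fun r => f (W r) (γ r)) (Icc t b))
    (hZ : ∀ s ∈ Icc t b, Z s = x + ∫ r in t..s, f (Z r) (β r))
    (hW : ∀ s ∈ Icc t b, W s = x + ∫ r in t..s, f (W r) (γ r)) :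
    EqOn Z W (Icc t b) := by
  have hc : ContinuousOn (fun s => ‖Z s - W s‖) (Icc t b) :=
    ((continuousOn_Icc_of_eq_add_integral hZi hZ).sub
      (continuousOn_Icc_of_eq_add_integral hWi hW)).norm
  have hgr : ∀ s ∈ Icc t b, ‖Z s - W s‖ ≤ L * ∫ r in t..s, ‖Z r - W r‖ := by
    intro s hs
    have hsub : Icc t s ⊆ Icc t b := Icc_subset_Icc_right hs.2
    calc ‖Z s - W s‖ = ‖∫ r in t..s, (f (Z r) (β r) - f (W r) (γ r))‖ := by
          rw [hZ s hs, hW s hs, add_sub_add_left_eq_sub, ← intervalIntegral.integral_sub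
            ((intervalIntegrable_iff_integrableOn_Icc_of_le hs.1).2 (hZi.mono_set hsub))
            ((intervalIntegrable_iff_integrableOn_Icc_of_le hs.1).2 (hWi.mono_set hsub))]
      _ ≤ ∫ r in t..s, L * ‖Z r - W r‖ := by
          refine intervalIntegral.norm_integral_le_of_norm_le hs.1 ?_
            ((continuousOn_const.mul (hc.mono hsub)).intervalIntegrable_of_Icc hs.1)
          filter_upwards [Measure.ae_ne volume b] with r hrb hr
          rw [← hβγ ⟨hr.1, lt_of_le_of_ne (hr.2.trans hs.2) hrb⟩]
          exact hfL _ _ _ (hβA r)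
      _ = L * ∫ r in t..s, ‖Z r - W r‖ := intervalIntegral.integral_const_mul _ _
  intro s hs
  exact sub_eq_zero.1 (norm_eq_zero.1
    (eq_zero_of_le_mul_integral hc (fun _ _ => norm_nonneg _) hgr s hs))

variable [TopologicalSpace F]

theorem IsTrajectory.integrableOn_Icc (hf : Continuous fun q : E × F => f q.1 q.2) {M : ℝ}
    (hM : ∀ z a, ‖f z a‖ ≤ M) (hα : StronglyMeasurable α) (hZ : IsTrajectory f α x t Z)
    (s : ℝ) : IntegrableOn (fun r => f (Z r) (α r)) (Icc t s) := by
  set g : ℝ → E := fun r => f (Z r) (α r)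
  have of_aesm : ∀ u, AEStronglyMeasurable g (volume.restrict (Icc t u)) →
      IntegrableOn g (Icc t u) := fun u hg =>
    IntegrableOn.of_bound measure_Icc_lt_top hg M (ae_of_all _ fun r => hM _ _)
  by_contra hs
  -- The integral equation alone does not make `Z` measurable. Past the first time `c` at which
  -- `g` stops being integrable, the integral is junk and `Z = x`; before `c`, `Z` is continuous.
  -- Either way `g` is measurable, hence integrable, on `Icc t s`.
  set Bad : Set ℝ := {u | ¬IntegrableOn g (Icc t u)}
  have hBad_ge : ∀ u ∈ Bad, t ≤ u := fun u hu =>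
    not_lt.1 fun hut => hu (by simp [Icc_eq_empty_of_lt hut])
  have hBad : BddBelow Bad := ⟨t, hBad_ge⟩
  set c := sInf Bad
  have hgood : ∀ u < c, IntegrableOn g (Icc t u) := fun u hu =>
    not_not.1 (notMem_of_lt_csInf hu hBad)
  have hbad : ∀ u, c < u → u ∈ Bad := fun u hu => by
    obtain ⟨v, hv, hvu⟩ := exists_lt_of_csInf_lt ⟨s, hs⟩ hu
    exact fun hi => hv (hi.mono_set (Icc_subset_Icc_right hvu.le))
  have hZc : ContinuousOn Z (Ico t c) := fun u hu => by
    have hmid : u < (u + c) / 2 := by linarith [hu.2]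
    refine (continuousOn_Icc_of_eq_add_integral (hgood _ (by linarith [hu.2])) (fun v _ => hZ v)
      u ⟨hu.1, hmid.le⟩).mono_of_mem_nhdsWithin ?_
    exact mem_nhdsWithin.2 ⟨Iio ((u + c) / 2), isOpen_Iio, hmid, fun v hv => ⟨hv.2.1, hv.1.le⟩⟩
  have hZx : ∀ u, c < u → Z u = x := fun u hu => by
    rw [hZ u, intervalIntegral.integral_undef, add_zero]
    exact (intervalIntegrable_iff_integrableOn_Icc_of_le (hBad_ge u (hbad u hu))).not.2 (hbad u hu)
  have hleft : AEStronglyMeasurable g (volume.restrict (Ico t c)) :=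
    hf.comp_aestronglyMeasurable
      ((hZc.aestronglyMeasurable measurableSet_Ico).prodMk hα.aestronglyMeasurable)
  have hright : AEStronglyMeasurable g (volume.restrict (Ici c)) := by
    rw [← Measure.restrict_congr_set Ioi_ae_eq_Ici]
    refine (hf.comp_aestronglyMeasurable
      (aestronglyMeasurable_const (b := x).prodMk hα.aestronglyMeasurable)).congr ?_
    exact ae_restrict_of_forall_mem measurableSet_Ioi fun r hr => by simp [g, hZx r hr]
  refine hs (of_aesm s ((aestronglyMeasurable_union_iff.2 ⟨hleft, hright⟩).mono_set ?_))
  exact fun r hr => (lt_or_ge r c).imp (fun h => ⟨hr.1, h⟩) id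

theorem IsTrajectory.continuousOn_Icc (hf : Continuous fun q : E × F => f q.1 q.2) {M : ℝ}
    (hM : ∀ z a, ‖f z a‖ ≤ M) (hα : StronglyMeasurable α) (hZ : IsTrajectory f α x t Z)
    (s : ℝ) : ContinuousOn Z (Icc t s) :=
  continuousOn_Icc_of_eq_add_integral (hZ.integrableOn_Icc hf hM hα s) fun u _ => hZ u

theorem IsTrajectory.eq_add_integral_of_le (hf : Continuous fun q : E × F => f q.1 q.2)
    {M : ℝ} (hM : ∀ z a, ‖f z a‖ ≤ M) (hα : StronglyMeasurable α)
    (hZ : IsTrajectory f α x t Z) {ζ s : ℝ} (htζ : t ≤ ζ) (hζs : ζ ≤ s) :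
    Z s = Z ζ + ∫ r in ζ..s, f (Z r) (α r) := by
  have hi := hZ.integrableOn_Icc hf hM hα s
  rw [hZ s, hZ ζ, add_assoc, intervalIntegral.integral_add_adjacent_intervals]
  · exact (intervalIntegrable_iff_integrableOn_Icc_of_le htζ).2
      (hi.mono_set (Icc_subset_Icc_right hζs))
  · exact (intervalIntegrable_iff_integrableOn_Icc_of_le hζs).2
      (hi.mono_set (Icc_subset_Icc_left htζ))

theorem IsTrajectory.eqOn_Icc (hf : Continuous fun q : E × F => f q.1 q.2) {M : ℝ}
    (hM : ∀ z a, ‖f z a‖ ≤ M) {A : Set F} {L b : ℝ}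
    (hfL : ∀ y z a, a ∈ A → ‖f y a - f z a‖ ≤ L * ‖y - z‖) (hβ : StronglyMeasurable β)
    (hγ : StronglyMeasurable γ) (hβA : ∀ r, β r ∈ A) (hβγ : EqOn β γ (Ioo t b))
    (hZ : IsTrajectory f β x t Z) (hW : IsTrajectory f γ x t W) : EqOn Z W (Icc t b) :=
  eqOn_Icc_of_eq_add_integral hfL hβA hβγ (hZ.integrableOn_Icc hf hM hβ b)
    (hW.integrableOn_Icc hf hM hγ b) (fun s _ => hZ s) fun s _ => hW s

theorem IsTrajectory.eqOn_Ici_of_restart (hf : Continuous fun q : E × F => f q.1 q.2) {M : ℝ}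
    (hM : ∀ z a, ‖f z a‖ ≤ M) {A : Set F} {L ζ : ℝ}
    (hfL : ∀ y z a, a ∈ A → ‖f y a - f z a‖ ≤ L * ‖y - z‖) (hα : StronglyMeasurable α)
    (hαA : ∀ r, α r ∈ A) (hZ : IsTrajectory f α x t Z) (hW : IsTrajectory f α (Z ζ) ζ W)
    (htζ : t ≤ ζ) : EqOn W Z (Ici ζ) := fun s hs =>
  eqOn_Icc_of_eq_add_integral hfL hαA (eqOn_refl _ _) (hW.integrableOn_Icc hf hM hα s)
    ((hZ.integrableOn_Icc hf hM hα s).mono_set (Icc_subset_Icc_left htζ)) (fun u _ => hW u)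
    (fun _ hu => hZ.eq_add_integral_of_le hf hM hα htζ hu.1) ⟨hs, le_rfl⟩

end Trajectory

theorem intervalIntegrable_mul_comp {E F : Type*} [TopologicalSpace E]
    [TopologicalSpace.PseudoMetrizableSpace E] [TopologicalSpace F] {Z : ℝ → E} {α : ℝ → F}
    {ℓ : E → F → ℝ → ℝ} {w : ℝ → ℝ} (hw : Continuous w)
    (hℓ : Continuous fun q : E × F × ℝ => ℓ q.1 q.2.1 q.2.2) {K : ℝ}
    (hK : ∀ z a s, ‖ℓ z a s‖ ≤ K) (hα : StronglyMeasurable α) {u v : ℝ} (huv : u ≤ v)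
    (hZ : ContinuousOn Z (Icc u v)) :
    IntervalIntegrable (fun s => w s * ℓ (Z s) (α s) s) volume u v := by
  refine (intervalIntegrable_iff_integrableOn_Icc_of_le huv).2
    (IntegrableOn.continuousOn_mul hw.continuousOn ?_ isCompact_Icc)
  exact IntegrableOn.of_bound measure_Icc_lt_top (hℓ.comp_aestronglyMeasurable
    ((hZ.aestronglyMeasurable measurableSet_Icc).prodMk
      (hα.aestronglyMeasurable.prodMk aestronglyMeasurable_id))) K (ae_of_all _ fun s => hK _ _ _)

theorem exists_lt_discounted_near {E : Type*} [PseudoMetricSpace E] {ψ : E → ℝ → ℝ} {T t u : ℝ}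
    {x : E} (hψ : ContinuousWithinAt (fun q : E × ℝ => ψ q.1 q.2) (univ ×ˢ Icc 0 T) (x, t))
    (ht : t ∈ Ico 0 T) (hu : u < ψ x t) (lam : ℝ) :
    ∃ δ > 0, t + δ ≤ T ∧ ∀ y s, dist y x < δ → s ∈ Icc t (t + δ) →
      u < Real.exp (-lam * (s - t)) * ψ y s := by
  have hg : ContinuousWithinAt (fun q : E × ℝ => Real.exp (-lam * (q.2 - t)) * ψ q.1 q.2)
      (univ ×ˢ Icc 0 T) (x, t) :=
    (by fun_prop : Continuous fun q : E × ℝ => Real.exp (-lam * (q.2 - t))).continuousWithinAt.mul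
      hψ
  obtain ⟨ε, hε, hball⟩ := Metric.mem_nhdsWithin_iff.1
    (hg.eventually (lt_mem_nhds (by simpa using hu)))
  refine ⟨min (ε / 2) (T - t), lt_min (by positivity) (by linarith [ht.2]), by
    linarith [min_le_right (ε / 2) (T - t)], fun y s hy hs => @hball (y, s) ⟨?_, ?_⟩⟩
  · have hst : s - t ≤ ε / 2 := by linarith [hs.2, min_le_left (ε / 2) (T - t)]
    rw [Metric.mem_ball, Prod.dist_eq, Real.dist_eq, abs_of_nonneg (by linarith [hs.1])]
    exact max_lt (hy.trans_le ((min_le_left _ _).trans (by linarith))) (by linarith)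
  · exact ⟨mem_univ y, ht.1.trans hs.1, hs.2.trans (by linarith [min_le_right (ε / 2) (T - t)])⟩

section StoppingProblem

variable {d m : ℕ} {A : Set (EuclideanSpace ℝ (Fin m))}
  {f : EuclideanSpace ℝ (Fin d) → EuclideanSpace ℝ (Fin m) → EuclideanSpace ℝ (Fin d)}
  {ℓ : EuclideanSpace ℝ (Fin d) → EuclideanSpace ℝ (Fin m) → ℝ → ℝ}
  {ψ : EuclideanSpace ℝ (Fin d) → ℝ → ℝ} {lam T : ℝ}
  {Y : EuclideanSpace ℝ (Fin d) → ℝ → (ℝ → EuclideanSpace ℝ (Fin m)) → ℝ →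
    EuclideanSpace ℝ (Fin d)}
  {V : EuclideanSpace ℝ (Fin d) → ℝ → ℝ} {α α' : ℝ → EuclideanSpace ℝ (Fin m)}
  {x : EuclideanSpace ℝ (Fin d)} {t ζ τ : ℝ}

def stoppingCosts (A : Set (EuclideanSpace ℝ (Fin m)))
    (ℓ : EuclideanSpace ℝ (Fin d) → EuclideanSpace ℝ (Fin m) → ℝ → ℝ)
    (ψ : EuclideanSpace ℝ (Fin d) → ℝ → ℝ) (lam : ℝ)
    (Y : EuclideanSpace ℝ (Fin d) → ℝ → (ℝ → EuclideanSpace ℝ (Fin m)) → ℝ →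
      EuclideanSpace ℝ (Fin d)) (T : ℝ) (x : EuclideanSpace ℝ (Fin d)) (t : ℝ) : Set ℝ :=
  {c | ∃ α ∈ Ctrl A, ∃ τ ∈ Icc t T, c = costJ ℓ ψ lam Y x t α τ}

def dppCosts (A : Set (EuclideanSpace ℝ (Fin m)))
    (ℓ : EuclideanSpace ℝ (Fin d) → EuclideanSpace ℝ (Fin m) → ℝ → ℝ) (lam : ℝ)
    (Y : EuclideanSpace ℝ (Fin d) → ℝ → (ℝ → EuclideanSpace ℝ (Fin m)) → ℝ →
      EuclideanSpace ℝ (Fin d))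
    (V : EuclideanSpace ℝ (Fin d) → ℝ → ℝ) (x : EuclideanSpace ℝ (Fin d)) (t ζ : ℝ) : Set ℝ :=
  {c | ∃ α ∈ Ctrl A,
    c = (∫ s in t..ζ, Real.exp (-lam * (s - t)) * ℓ (Y x t α s) (α s) s)
      + Real.exp (-lam * (ζ - t)) * V (Y x t α ζ) ζ}

theorem piecewise_mem_ctrl (hα : α ∈ Ctrl A) (hα' : α' ∈ Ctrl A) (ζ : ℝ) :
    (Iio ζ).piecewise α α' ∈ Ctrl A :=
  ⟨hα.1.piecewise measurableSet_Iio hα'.1, fun s => by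
    by_cases hs : s ∈ Iio ζ
    · simpa [hs] using hα.2 s
    · simpa [hs] using hα'.2 s⟩

theorem discounted_obstacle_le_costJ (hℓ0 : ∀ x a s, 0 ≤ ℓ x a s) (hτ : t ≤ τ) :
    Real.exp (-lam * (τ - t)) * ψ (Y x t α τ) τ ≤ costJ ℓ ψ lam Y x t α τ :=
  le_add_of_nonneg_left <| intervalIntegral.integral_nonneg hτ fun _ _ =>
    mul_nonneg (Real.exp_pos _).le (hℓ0 _ _ _)

theorem costJ_nonneg (hℓ0 : ∀ x a s, 0 ≤ ℓ x a s) (hψ0 : ∀ x t, 0 ≤ ψ x t) (hτ : t ≤ τ) :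
    0 ≤ costJ ℓ ψ lam Y x t α τ :=
  (mul_nonneg (Real.exp_pos _).le (hψ0 _ _)).trans (discounted_obstacle_le_costJ hℓ0 hτ)

theorem costJ_eq_add_costJ
    (hfc : Continuous fun q : EuclideanSpace ℝ (Fin d) × EuclideanSpace ℝ (Fin m) => f q.1 q.2)
    {M : ℝ} (hfM : ∀ x a, ‖f x a‖ ≤ M)
    {L : ℝ} (hfLip : ∀ x y a, a ∈ A → ‖f x a - f y a‖ ≤ L * ‖x - y‖)
    (hℓ0 : ∀ x a s, 0 ≤ ℓ x a s) (hℓb : ∃ K, ∀ x a s, ℓ x a s ≤ K)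
    (hℓc : Continuous fun q : EuclideanSpace ℝ (Fin d) × EuclideanSpace ℝ (Fin m) × ℝ =>
      ℓ q.1 q.2.1 q.2.2)
    (hY : ∀ x t α, IsTrajectory f α x t (Y x t α)) (hα : α ∈ Ctrl A)
    (htζ : t ≤ ζ) (hζτ : ζ ≤ τ) :
    costJ ℓ ψ lam Y x t α τ =
      (∫ s in t..ζ, Real.exp (-lam * (s - t)) * ℓ (Y x t α s) (α s) s)
        + Real.exp (-lam * (ζ - t)) * costJ ℓ ψ lam Y (Y x t α ζ) ζ α τ := by
  obtain ⟨K, hK⟩ := hℓb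
  have hαs := hα.1.stronglyMeasurable
  have hflow : EqOn (Y (Y x t α ζ) ζ α) (Y x t α) (Ici ζ) :=
    (hY x t α).eqOn_Ici_of_restart hfc hfM hfLip hαs hα.2 (hY _ _ _) htζ
  have hi : ∀ u v, t ≤ u → u ≤ v → IntervalIntegrable
      (fun s => Real.exp (-lam * (s - t)) * ℓ (Y x t α s) (α s) s) volume u v :=
    fun u v htu huv => intervalIntegrable_mul_comp (by fun_prop) hℓc
      (fun z a s => by rw [Real.norm_of_nonneg (hℓ0 z a s)]; exact hK z a s) hαs huv
      (((hY x t α).continuousOn_Icc hfc hfM hαs v).mono (Icc_subset_Icc_left htu))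
  have hexp : ∀ s, Real.exp (-lam * (s - t)) =
      Real.exp (-lam * (ζ - t)) * Real.exp (-lam * (s - ζ)) := fun s => by
    rw [← Real.exp_add]; ring_nf
  have htail : (∫ s in ζ..τ, Real.exp (-lam * (s - t)) * ℓ (Y x t α s) (α s) s) =
      Real.exp (-lam * (ζ - t)) *
        ∫ s in ζ..τ, Real.exp (-lam * (s - ζ)) * ℓ (Y (Y x t α ζ) ζ α s) (α s) s := by
    rw [← intervalIntegral.integral_const_mul]
    refine intervalIntegral.integral_congr fun s hs => ?_
    rw [uIcc_of_le hζτ] at hs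
    simp only [hflow hs.1, hexp s, mul_assoc]
  unfold costJ
  rw [← intervalIntegral.integral_add_adjacent_intervals (hi t ζ le_rfl htζ) (hi ζ τ htζ hζτ),
    htail, hflow (show ζ ≤ τ from hζτ), hexp τ]
  ring

theorem costJ_piecewise
    (hfc : Continuous fun q : EuclideanSpace ℝ (Fin d) × EuclideanSpace ℝ (Fin m) => f q.1 q.2)
    {M : ℝ} (hfM : ∀ x a, ‖f x a‖ ≤ M)
    {L : ℝ} (hfLip : ∀ x y a, a ∈ A → ‖f x a - f y a‖ ≤ L * ‖x - y‖)
    (hℓ0 : ∀ x a s, 0 ≤ ℓ x a s) (hℓb : ∃ K, ∀ x a s, ℓ x a s ≤ K)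
    (hℓc : Continuous fun q : EuclideanSpace ℝ (Fin d) × EuclideanSpace ℝ (Fin m) × ℝ =>
      ℓ q.1 q.2.1 q.2.2)
    (hY : ∀ x t α, IsTrajectory f α x t (Y x t α)) (hα : α ∈ Ctrl A) (hα' : α' ∈ Ctrl A)
    (htζ : t ≤ ζ) (hζτ : ζ ≤ τ) :
    costJ ℓ ψ lam Y x t ((Iio ζ).piecewise α α') τ =
      (∫ s in t..ζ, Real.exp (-lam * (s - t)) * ℓ (Y x t α s) (α s) s)
        + Real.exp (-lam * (ζ - t)) * costJ ℓ ψ lam Y (Y x t α ζ) ζ α' τ := by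
  have hβ := piecewise_mem_ctrl hα hα' ζ
  have hβα : ∀ s < ζ, (Iio ζ).piecewise α α' s = α s := fun s hs =>
    piecewise_eq_of_mem (Iio ζ) α α' hs
  have hβα' : ∀ s, ζ ≤ s → (Iio ζ).piecewise α α' s = α' s := fun s hs =>
    piecewise_eq_of_notMem (Iio ζ) α α' (not_lt.2 hs)
  have hβαY : EqOn (Y x t ((Iio ζ).piecewise α α')) (Y x t α) (Icc t ζ) :=
    (hY x t _).eqOn_Icc hfc hfM hfLip hβ.1.stronglyMeasurable hα.1.stronglyMeasurable hβ.2
      (fun r hr => hβα r hr.2) (hY x t α)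
  have hβα'Y : EqOn (Y (Y x t α ζ) ζ ((Iio ζ).piecewise α α')) (Y (Y x t α ζ) ζ α')
      (Icc ζ τ) :=
    (hY _ ζ _).eqOn_Icc hfc hfM hfLip hβ.1.stronglyMeasurable hα'.1.stronglyMeasurable hβ.2
      (fun r hr => hβα' r hr.1.le) (hY _ ζ α')
  rw [costJ_eq_add_costJ hfc hfM hfLip hℓ0 hℓb hℓc hY hβ htζ hζτ, hβαY ⟨htζ, le_rfl⟩]
  congr 1
  · refine intervalIntegral.integral_congr_ae ?_
    filter_upwards [Measure.ae_ne (volume : Measure ℝ) ζ] with s hsζ hs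
    rw [uIoc_of_le htζ] at hs
    have hs' : s ∈ Ioo t ζ := ⟨hs.1, lt_of_le_of_ne hs.2 hsζ⟩
    rw [hβαY (Ioo_subset_Icc_self hs'), hβα s hs'.2]
  · unfold costJ
    rw [hβα'Y ⟨hζτ, le_rfl⟩]
    congr 2
    refine intervalIntegral.integral_congr fun s hs => ?_
    rw [uIcc_of_le hζτ] at hs
    simp only [hβα'Y hs, hβα' s hs.1]

theorem ctrl_nonempty (hAne : A.Nonempty) : (Ctrl A).Nonempty :=
  let ⟨a, ha⟩ := hAne
  ⟨fun _ => a, measurable_const, fun _ => ha⟩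

theorem stoppingCosts_nonempty (hAne : A.Nonempty) (ht : t ≤ T) :
    (stoppingCosts A ℓ ψ lam Y T x t).Nonempty :=
  let ⟨α, hα⟩ := ctrl_nonempty hAne
  ⟨_, α, hα, t, ⟨le_rfl, ht⟩, rfl⟩

theorem value_le_costJ (hℓ0 : ∀ x a s, 0 ≤ ℓ x a s) (hψ0 : ∀ x t, 0 ≤ ψ x t)
    (hV : ∀ x t, V x t = sInf (stoppingCosts A ℓ ψ lam Y T x t)) (hα : α ∈ Ctrl A)
    (hτ : τ ∈ Icc t T) : V x t ≤ costJ ℓ ψ lam Y x t α τ := by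
  rw [hV]
  refine csInf_le ⟨0, ?_⟩ ⟨α, hα, τ, hτ, rfl⟩
  rintro _ ⟨α, -, τ, hτ, rfl⟩
  exact costJ_nonneg hℓ0 hψ0 hτ.1

theorem le_value (hAne : A.Nonempty) (hV : ∀ x t, V x t = sInf (stoppingCosts A ℓ ψ lam Y T x t))
    (ht : t ≤ T) {b : ℝ} (hb : ∀ α ∈ Ctrl A, ∀ τ ∈ Icc t T, b ≤ costJ ℓ ψ lam Y x t α τ) :
    b ≤ V x t := by
  rw [hV]
  refine le_csInf (stoppingCosts_nonempty hAne ht) ?_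
  rintro _ ⟨α, hα, τ, hτ, rfl⟩
  exact hb α hα τ hτ

theorem value_le_sInf_dppCosts
    (hfc : Continuous fun q : EuclideanSpace ℝ (Fin d) × EuclideanSpace ℝ (Fin m) => f q.1 q.2)
    {M : ℝ} (hfM : ∀ x a, ‖f x a‖ ≤ M)
    {L : ℝ} (hfLip : ∀ x y a, a ∈ A → ‖f x a - f y a‖ ≤ L * ‖x - y‖)
    (hℓ0 : ∀ x a s, 0 ≤ ℓ x a s) (hℓb : ∃ K, ∀ x a s, ℓ x a s ≤ K)
    (hℓc : Continuous fun q : EuclideanSpace ℝ (Fin d) × EuclideanSpace ℝ (Fin m) × ℝ =>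
      ℓ q.1 q.2.1 q.2.2)
    (hψ0 : ∀ x t, 0 ≤ ψ x t) (hAne : A.Nonempty)
    (hY : ∀ x t α, IsTrajectory f α x t (Y x t α))
    (hV : ∀ x t, V x t = sInf (stoppingCosts A ℓ ψ lam Y T x t)) (htζ : t ≤ ζ) (hζT : ζ ≤ T) :
    V x t ≤ sInf (dppCosts A ℓ lam Y V x t ζ) := by
  obtain ⟨α₀, hα₀⟩ := ctrl_nonempty hAne
  refine le_csInf ⟨_, α₀, hα₀, rfl⟩ ?_
  rintro _ ⟨α, hα, rfl⟩
  have he := Real.exp_pos (-lam * (ζ - t))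
  have key : (V x t - ∫ s in t..ζ, Real.exp (-lam * (s - t)) * ℓ (Y x t α s) (α s) s) /
      Real.exp (-lam * (ζ - t)) ≤ V (Y x t α ζ) ζ := by
    refine le_value hAne hV hζT fun α' hα' τ hτ => ?_
    rw [div_le_iff₀' he, sub_le_iff_le_add',
      ← costJ_piecewise hfc hfM hfLip hℓ0 hℓb hℓc hY hα hα' htζ hτ.1]
    exact value_le_costJ hℓ0 hψ0 hV (piecewise_mem_ctrl hα hα' ζ) ⟨htζ.trans hτ.1, hτ.2⟩
  rw [div_le_iff₀' he] at key
  linarith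

theorem sInf_dppCosts_le_value
    (hfc : Continuous fun q : EuclideanSpace ℝ (Fin d) × EuclideanSpace ℝ (Fin m) => f q.1 q.2)
    {M : ℝ} (hfM : ∀ x a, ‖f x a‖ ≤ M)
    {L : ℝ} (hfLip : ∀ x y a, a ∈ A → ‖f x a - f y a‖ ≤ L * ‖x - y‖)
    (hℓ0 : ∀ x a s, 0 ≤ ℓ x a s) (hℓb : ∃ K, ∀ x a s, ℓ x a s ≤ K)
    (hℓc : Continuous fun q : EuclideanSpace ℝ (Fin d) × EuclideanSpace ℝ (Fin m) × ℝ =>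
      ℓ q.1 q.2.1 q.2.2)
    (hψ0 : ∀ x t, 0 ≤ ψ x t) (hAne : A.Nonempty)
    (hY : ∀ x t α, IsTrajectory f α x t (Y x t α))
    (hV : ∀ x t, V x t = sInf (stoppingCosts A ℓ ψ lam Y T x t)) (htζ : t ≤ ζ) (hζT : ζ ≤ T)
    {u : ℝ} (hu : V x t < u)
    (hearly : ∀ α ∈ Ctrl A, ∀ τ ∈ Ico t ζ, u ≤ costJ ℓ ψ lam Y x t α τ) :
    sInf (dppCosts A ℓ lam Y V x t ζ) ≤ V x t := by
  have hbdd : BddBelow (dppCosts A ℓ lam Y V x t ζ) := by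
    refine ⟨0, ?_⟩
    rintro _ ⟨α, -, rfl⟩
    exact add_nonneg
      (intervalIntegral.integral_nonneg htζ fun _ _ => mul_nonneg (Real.exp_pos _).le (hℓ0 _ _ _))
      (mul_nonneg (Real.exp_pos _).le
        (le_value hAne hV hζT fun _ _ _ hτ => costJ_nonneg hℓ0 hψ0 hτ.1))
  rw [hV x t] at hu ⊢
  refine le_csInf_of_forall_lt (stoppingCosts_nonempty hAne (htζ.trans hζT)) hu ?_
  rintro _ ⟨α, hα, τ, hτ, rfl⟩ hlt
  rcases lt_or_ge τ ζ with hτζ | hζτ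
  · exact absurd (hearly α hα τ ⟨hτ.1, hτζ⟩) hlt.not_ge
  calc sInf (dppCosts A ℓ lam Y V x t ζ)
      ≤ (∫ s in t..ζ, Real.exp (-lam * (s - t)) * ℓ (Y x t α s) (α s) s)
          + Real.exp (-lam * (ζ - t)) * V (Y x t α ζ) ζ := csInf_le hbdd ⟨α, hα, rfl⟩
    _ ≤ (∫ s in t..ζ, Real.exp (-lam * (s - t)) * ℓ (Y x t α s) (α s) s)
          + Real.exp (-lam * (ζ - t)) * costJ ℓ ψ lam Y (Y x t α ζ) ζ α τ := by
      gcongr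
      exact value_le_costJ hℓ0 hψ0 hV hα ⟨hζτ, hτ.2⟩
    _ = costJ ℓ ψ lam Y x t α τ :=
      (costJ_eq_add_costJ hfc hfM hfLip hℓ0 hℓb hℓc hY hα htζ hζτ).symm

end StoppingProblem

theorem stmt5_general
    {d m : ℕ} (T lam : ℝ)
    (A : Set (EuclideanSpace ℝ (Fin m))) (hAne : A.Nonempty)
    (f : EuclideanSpace ℝ (Fin d) → EuclideanSpace ℝ (Fin m) → EuclideanSpace ℝ (Fin d))
    (hfc : Continuous fun q : EuclideanSpace ℝ (Fin d) × EuclideanSpace ℝ (Fin m) =>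
      f q.1 q.2)
    (M : ℝ) (hfM : ∀ x a, ‖f x a‖ ≤ M)
    (L : ℝ) (hfLip : ∀ x y a, a ∈ A → ‖f x a - f y a‖ ≤ L * ‖x - y‖)
    (ℓ : EuclideanSpace ℝ (Fin d) → EuclideanSpace ℝ (Fin m) → ℝ → ℝ)
    (hℓ0 : ∀ x a s, 0 ≤ ℓ x a s) (hℓb : ∃ K, ∀ x a s, ℓ x a s ≤ K)
    (hℓc : Continuous fun q : EuclideanSpace ℝ (Fin d) × EuclideanSpace ℝ (Fin m) × ℝ =>
      ℓ q.1 q.2.1 q.2.2)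
    (ψ : EuclideanSpace ℝ (Fin d) → ℝ → ℝ)
    (hψ0 : ∀ x t, 0 ≤ ψ x t)
    (hψuc : UniformContinuousOn (fun q : EuclideanSpace ℝ (Fin d) × ℝ => ψ q.1 q.2)
      (univ ×ˢ Icc (0 : ℝ) T))
    (Y : EuclideanSpace ℝ (Fin d) → ℝ → (ℝ → EuclideanSpace ℝ (Fin m)) → ℝ →
      EuclideanSpace ℝ (Fin d))
    (hY : ∀ x t α s, Y x t α s = x + ∫ ζ in t..s, f (Y x t α ζ) (α ζ))
    (V : EuclideanSpace ℝ (Fin d) → ℝ → ℝ)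
    (hV : ∀ x t, V x t =
      sInf {c | ∃ α ∈ Ctrl A, ∃ τ ∈ Icc t T, c = costJ ℓ ψ lam Y x t α τ})
    (x : EuclideanSpace ℝ (Fin d)) (t : ℝ) (ht : t ∈ Ico (0 : ℝ) T)
    (hobst : V x t < ψ x t) :
    ∃ t₀ > (0 : ℝ), ∀ ζ ∈ Icc t (t + t₀),
      V x t = sInf {c | ∃ α ∈ Ctrl A,
        c = (∫ s in t..ζ, Real.exp (-lam * (s - t)) * ℓ (Y x t α s) (α s) s)
          + Real.exp (-lam * (ζ - t)) * V (Y x t α ζ) ζ} := by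
  have hM : 0 ≤ M := (norm_nonneg _).trans (hfM 0 0)
  obtain ⟨δ, hδ, hδT, hnear⟩ := exists_lt_discounted_near
    (hψuc.continuousOn (x, t) ⟨mem_univ x, Ico_subset_Icc_self ht⟩) ht
    (add_div_two_lt_right.2 hobst) lam
  have hδM : δ / (M + 1) ≤ δ := div_le_self hδ.le (by linarith)
  refine ⟨δ / (M + 1), by positivity, fun ζ hζ => le_antisymm ?_ ?_⟩
  · exact value_le_sInf_dppCosts hfc hfM hfLip hℓ0 hℓb hℓc hψ0 hAne hY hV hζ.1 (by linarith [hζ.2])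
  refine sInf_dppCosts_le_value hfc hfM hfLip hℓ0 hℓb hℓc hψ0 hAne hY hV hζ.1 (by linarith [hζ.2])
    (left_lt_add_div_two.2 hobst) fun α _ τ hτ => ?_
  have hdist : dist (Y x t α τ) x < δ := by
    calc dist (Y x t α τ) x ≤ M * (τ - t) := IsTrajectory.dist_le hfM (hY x t α) hτ.1
      _ ≤ M * (δ / (M + 1)) := by gcongr; linarith [hτ.2, hζ.2]
      _ < δ := by rw [mul_div_assoc', div_lt_iff₀ (by linarith)]; linarith
  exact (hnear _ τ hdist ⟨hτ.1, by linarith [hτ.2, hζ.2]⟩).le.trans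
    (discounted_obstacle_le_costJ hℓ0 hτ.1)

/-- Local dynamic programming equality where the obstacle is not attained:
if V(x,t) < ψ(x,t) then for some t₀ > 0 and all ζ ∈ [t, t+t₀],
V(x,t) = inf_α [∫_t^ζ e^{−λ(s−t)} ℓ ds + e^{−λ(ζ−t)} V(y(ζ), ζ)]. -/
theorem stmt5
    {d m : ℕ} (T lam : ℝ) (hT : 0 < T) (hlam : 0 ≤ lam)
    (A : Set (EuclideanSpace ℝ (Fin m))) (hA : IsCompact A) (hAne : A.Nonempty)
    (f : EuclideanSpace ℝ (Fin d) → EuclideanSpace ℝ (Fin m) → EuclideanSpace ℝ (Fin d))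
    (hfc : Continuous fun q : EuclideanSpace ℝ (Fin d) × EuclideanSpace ℝ (Fin m) =>
      f q.1 q.2)
    (M : ℝ) (hfM : ∀ x a, ‖f x a‖ ≤ M)
    (L : ℝ) (hfLip : ∀ x y a, a ∈ A → ‖f x a - f y a‖ ≤ L * ‖x - y‖)
    (ℓ : EuclideanSpace ℝ (Fin d) → EuclideanSpace ℝ (Fin m) → ℝ → ℝ)
    (hℓ0 : ∀ x a s, 0 ≤ ℓ x a s) (hℓb : ∃ K, ∀ x a s, ℓ x a s ≤ K)
    (hℓc : Continuous fun q : EuclideanSpace ℝ (Fin d) × EuclideanSpace ℝ (Fin m) × ℝ =>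
      ℓ q.1 q.2.1 q.2.2)
    (hℓuc : ∀ ε > 0, ∃ δ > 0, ∀ x y a s, ‖x - y‖ < δ → |ℓ x a s - ℓ y a s| < ε)
    (ψ : EuclideanSpace ℝ (Fin d) → ℝ → ℝ)
    (hψ0 : ∀ x t, 0 ≤ ψ x t) (hψb : ∃ K, ∀ x t, ψ x t ≤ K)
    (hψuc : UniformContinuousOn (fun q : EuclideanSpace ℝ (Fin d) × ℝ => ψ q.1 q.2)
      (univ ×ˢ Icc (0 : ℝ) T))
    (Y : EuclideanSpace ℝ (Fin d) → ℝ → (ℝ → EuclideanSpace ℝ (Fin m)) → ℝ →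
      EuclideanSpace ℝ (Fin d))
    (hY : ∀ x t α s, Y x t α s = x + ∫ ζ in t..s, f (Y x t α ζ) (α ζ))
    (V : EuclideanSpace ℝ (Fin d) → ℝ → ℝ)
    (hV : ∀ x t, V x t =
      sInf {c | ∃ α ∈ Ctrl A, ∃ τ ∈ Icc t T, c = costJ ℓ ψ lam Y x t α τ})
    (x : EuclideanSpace ℝ (Fin d)) (t : ℝ) (ht : t ∈ Ico (0 : ℝ) T)
    (hobst : V x t < ψ x t) :
    ∃ t₀ > (0 : ℝ), ∀ ζ ∈ Icc t (t + t₀),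
      V x t = sInf {c | ∃ α ∈ Ctrl A,
        c = (∫ s in t..ζ, Real.exp (-lam * (s - t)) * ℓ (Y x t α s) (α s) s)
          + Real.exp (-lam * (ζ - t)) * V (Y x t α ζ) ζ} :=
  stmt5_general T lam A hAne f hfc M hfM L hfLip ℓ hℓ0 hℓb hℓc ψ hψ0 hψuc Y hY V hV x t ht hobst
end
end

section
/- The value functions V_p of the backwardly-defined time-dependent optimal stopping problems are bounded and uniformly continuous on ℝ^d × [0,T] for every p ∈ ℐ = {0,1}^N. -/
open Set MeasureTheory intervalIntegral RealInnerProductSpace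

noncomputable section

/-- The set of admissible switching destinations from `p`:
already-visited targets stay visited and at least one new target is marked. -/
def SwitchSet {N : ℕ} (p : Fin N → Bool) : Set (Fin N → Bool) :=
  {q | (∀ i, p i = true → q i = true) ∧ ∃ l, p l = false ∧ q l = true}

/-- The Hamiltonian `H^p(x,t,ξ) = sup_{a ∈ A} {−f(x,a,p)·ξ − ℓ(x,a,p,t)}`. -/
def Hamp {d m N : ℕ} (A : Set (EuclideanSpace ℝ (Fin m)))
    (f : EuclideanSpace ℝ (Fin d) → EuclideanSpace ℝ (Fin m) → (Fin N → Bool) →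
      EuclideanSpace ℝ (Fin d))
    (ℓ : EuclideanSpace ℝ (Fin d) → EuclideanSpace ℝ (Fin m) → (Fin N → Bool) → ℝ → ℝ)
    (p : Fin N → Bool)
    (x : EuclideanSpace ℝ (Fin d)) (t : ℝ) (ξ : EuclideanSpace ℝ (Fin d)) : ℝ :=
  sSup ((fun a => -⟪f x a p, ξ⟫ - ℓ x a p t) '' A)

/-!
Induction along the strict order of `Fin N → Bool`: every `p' ∈ SwitchSet p` lies strictly above
`p`, and `V_{p̄} = 0`. In the inductive step the obstacles `C(·, p, p') + V_{p'}` form a finite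
family of bounded uniformly continuous functions. Stopping at once bounds `V_p` from above, and
the boundedness of `ℓ`, `C` and `V_{p'}` bounds it from below. For `t ≤ t'`, a strategy
`(α, τ, p')` from `(x, t)` is compared with `(α, max τ t', p')`, which is admissible from
`(y, t')`: by Grönwall the two trajectories stay within `(‖x - y‖ + M (t' - t)) e^{LT}` of each
other, so running costs, discount factors and obstacles differ by uniformly small amounts, and so
do the infima.
-/

open Real Filter Topology

lemma le_mul_exp_of_le_add_mul_integral {h : ℝ → ℝ} {a b c K : ℝ} (hh : Continuous h)
    (hK : 0 ≤ K) (hle : ∀ s ∈ Icc a b, h s ≤ c + K * ∫ u in a..s, h u) :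
    ∀ s ∈ Icc a b, h s ≤ c * exp (K * (s - a)) := by
  have hφ : ∀ s, HasDerivAt (fun s => ∫ u in a..s, h u) (h s) s := fun s =>
    (hh.integral_hasStrictDerivAt a s).hasDerivAt
  have hgr := le_gronwallBound_of_liminf_deriv_right_le (δ := 0) (K := K) (ε := c) (b := b)
    (continuous_iff_continuousAt.2 fun s => (hφ s).continuousAt).continuousOn
    (fun s _ r hr => (hφ s).hasDerivWithinAt.liminf_right_slope_le hr)
    (by rw [intervalIntegral.integral_same]) fun s hs => by
      linarith [hle s (Ico_subset_Icc_self hs)]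
  intro s hs
  calc h s ≤ c + K * ∫ u in a..s, h u := hle s hs
    _ ≤ c + K * gronwallBound 0 K c (s - a) := by gcongr; exact hgr s hs
    _ = c * exp (K * (s - a)) := by
      rcases hK.eq_or_lt with rfl | hK
      · simp [gronwallBound_K0]
      · rw [gronwallBound_of_K_ne_0 hK.ne']
        field_simp
        ring

lemma aestronglyMeasurable_restrict_Ioc_of_forall_lt {E : Type*} [NormedAddCommGroup E]
    {g : ℝ → E} {t b : ℝ}
    (h : ∀ s < b, AEStronglyMeasurable g (volume.restrict (Ioc t s))) :
    AEStronglyMeasurable g (volume.restrict (Ioc t b)) := by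
  rcases le_or_gt b t with hbt | htb
  · rw [Ioc_eq_empty_of_le hbt, Measure.restrict_empty]
    exact aestronglyMeasurable_zero_measure g
  obtain ⟨u, -, hut, hu⟩ := exists_seq_strictMono_tendsto' htb
  have hIoo : Ioo t b = ⋃ n, Ioc t (u n) := by
    ext s
    simp only [mem_Ioo, mem_iUnion, mem_Ioc]
    constructor
    · rintro ⟨hts, hsb⟩
      obtain ⟨n, hn⟩ := (hu.eventually (lt_mem_nhds hsb)).exists
      exact ⟨n, hts, hn.le⟩
    · rintro ⟨n, hts, hsn⟩
      exact ⟨hts, hsn.trans_lt (hut n).2⟩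
  rw [← Measure.restrict_congr_set Ioo_ae_eq_Ioc, hIoo, aestronglyMeasurable_iUnion_iff]
  exact fun n => h _ (hut n).2

section Trajectory

variable {E U : Type*} [NormedAddCommGroup E] [NormedSpace ℝ E]

def IsIntegralSolution (F : E → U → E) (α : ℝ → U) (x : E) (t : ℝ) (Y : ℝ → E) : Prop :=
  ∀ s, Y s = x + ∫ ζ in t..s, F (Y ζ) (α ζ)

namespace IsIntegralSolution

variable {F : E → U → E} {α : ℝ → U} {x : E} {t M : ℝ} {Y : ℝ → E}

lemma apply_self (hY : IsIntegralSolution F α x t Y) : Y t = x := by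
  simpa using hY t

variable [TopologicalSpace U]

/- A non-measurable integrand would have integral `0`, freezing `Y` at `x`; the first time
where measurability fails is therefore absurd. -/
lemma aestronglyMeasurable (hY : IsIntegralSolution F α x t Y)
    (hF : Continuous fun q : E × U => F q.1 q.2) (hα : StronglyMeasurable α) (S : ℝ) :
    AEStronglyMeasurable (fun ζ => F (Y ζ) (α ζ)) (volume.restrict (Ioc t S)) := by
  set P : ℝ → Prop :=
    fun s => AEStronglyMeasurable (fun ζ => F (Y ζ) (α ζ)) (volume.restrict (Ioc t s))
  have hanti : ∀ s s', s' ≤ s → P s → P s' := fun s s' h hs =>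
    hs.mono_measure (Measure.restrict_mono (Ioc_subset_Ioc_right h) le_rfl)
  have hle : ∀ s ≤ t, P s := fun s hs => by
    simp only [P, Ioc_eq_empty_of_le hs, Measure.restrict_empty, aestronglyMeasurable_zero_measure]
  by_contra hS
  set B := {s | ¬ P s}
  have hBdd : BddBelow B := ⟨t, fun s hs => (not_le.1 fun h => hs (hle s h)).le⟩
  have hlt : ∀ s < sInf B, P s := fun s hs => not_not.1 fun h => (csInf_le hBdd h).not_gt hs
  have hb : P (sInf B) := aestronglyMeasurable_restrict_Ioc_of_forall_lt hlt
  have htb : t ≤ sInf B := le_csInf ⟨S, hS⟩ fun s hs => not_lt.1 fun h => hs (hle s h.le)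
  have hYx : ∀ s, sInf B < s → Y s = x := fun s hs => by
    obtain ⟨s₀, hs₀, hs₀s⟩ := exists_lt_of_csInf_lt ⟨S, hS⟩ hs
    rw [hY s, intervalIntegral.integral_of_le (htb.trans hs.le),
      integral_non_aestronglyMeasurable fun h => hs₀ (hanti s s₀ hs₀s.le h), add_zero]
  have hbS : sInf B ≤ S := csInf_le hBdd hS
  apply hS
  rw [← Ioc_union_Ioc_eq_Ioc htb hbS, aestronglyMeasurable_union_iff]
  refine ⟨hb, (hF.comp_stronglyMeasurable
    ((stronglyMeasurable_const (b := x)).prodMk hα)).aestronglyMeasurable.congr ?_⟩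
  filter_upwards [ae_restrict_mem measurableSet_Ioc] with ζ hζ
  simp only [hYx ζ hζ.1]

lemma intervalIntegrable (hY : IsIntegralSolution F α x t Y)
    (hF : Continuous fun q : E × U => F q.1 q.2) (hFM : ∀ x a, ‖F x a‖ ≤ M)
    (hα : StronglyMeasurable α) {a b : ℝ} (ha : t ≤ a) (hb : t ≤ b) :
    IntervalIntegrable (fun ζ => F (Y ζ) (α ζ)) volume a b :=
  (intervalIntegrable_const (c := M)).mono_fun'
    ((hY.aestronglyMeasurable hF hα (max a b)).mono_measure
      (Measure.restrict_mono (Ioc_subset_Ioc_left (le_min ha hb)) le_rfl))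
    (ae_of_all _ fun _ => hFM _ _)

lemma sub_eq_integral (hY : IsIntegralSolution F α x t Y)
    (hF : Continuous fun q : E × U => F q.1 q.2) (hFM : ∀ x a, ‖F x a‖ ≤ M)
    (hα : StronglyMeasurable α) {a b : ℝ} (ha : t ≤ a) (hb : t ≤ b) :
    Y b - Y a = ∫ ζ in a..b, F (Y ζ) (α ζ) := by
  rw [hY b, hY a, add_sub_add_left_eq_sub, intervalIntegral.integral_interval_sub_left
    (hY.intervalIntegrable hF hFM hα le_rfl hb) (hY.intervalIntegrable hF hFM hα le_rfl ha)]

lemma norm_sub_le (hY : IsIntegralSolution F α x t Y)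
    (hF : Continuous fun q : E × U => F q.1 q.2) (hFM : ∀ x a, ‖F x a‖ ≤ M)
    (hα : StronglyMeasurable α) {a b : ℝ} (ha : t ≤ a) (hb : t ≤ b) :
    ‖Y b - Y a‖ ≤ M * |b - a| := by
  rw [hY.sub_eq_integral hF hFM hα ha hb]
  exact intervalIntegral.norm_integral_le_of_norm_le_const fun ζ _ => hFM _ _

lemma continuousOn (hY : IsIntegralSolution F α x t Y)
    (hF : Continuous fun q : E × U => F q.1 q.2) (hFM : ∀ x a, ‖F x a‖ ≤ M)
    (hα : StronglyMeasurable α) : ContinuousOn Y (Ici t) := by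
  have hM : 0 ≤ M := (norm_nonneg _).trans (hFM x (α t))
  refine (LipschitzOnWith.of_dist_le_mul (K := M.toNNReal) fun a ha b hb => ?_).continuousOn
  rw [Real.coe_toNNReal M hM, dist_eq_norm, Real.dist_eq]
  exact hY.norm_sub_le hF hFM hα hb ha

lemma norm_sub_le_mul_exp {A : Set U} {L : ℝ} (hL : 0 ≤ L)
    (hF : Continuous fun q : E × U => F q.1 q.2) (hFM : ∀ x a, ‖F x a‖ ≤ M)
    (hFL : ∀ x y a, a ∈ A → ‖F x a - F y a‖ ≤ L * ‖x - y‖)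
    (hα : StronglyMeasurable α) (hαA : ∀ s, α s ∈ A)
    {y : E} {t' : ℝ} {Y' : ℝ → E} (hY : IsIntegralSolution F α x t Y)
    (hY' : IsIntegralSolution F α y t' Y') (ht : t ≤ t') {s : ℝ} (hs : t' ≤ s) :
    ‖Y s - Y' s‖ ≤ ‖Y t' - y‖ * exp (L * (s - t')) := by
  set h : ℝ → ℝ := fun u => ‖Y (max t' u) - Y' (max t' u)‖
  have hmax : ∀ u, t' ≤ u → h u = ‖Y u - Y' u‖ := fun u hu => by simp only [h, max_eq_right hu]
  have hh : Continuous h := by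
    refine (continuousOn_univ.1 (ContinuousOn.comp (g := fun u => Y u - Y' u) ?_
      (continuous_const.max continuous_id).continuousOn fun u _ => le_max_left t' u)).norm
    exact ((hY.continuousOn hF hFM hα).mono (Ici_subset_Ici.2 ht)).sub
      (hY'.continuousOn hF hFM hα)
  refine hmax s hs ▸ le_mul_exp_of_le_add_mul_integral hh hL (fun u hu => ?_) s ⟨hs, le_rfl⟩
  have htu : t ≤ u := ht.trans hu.1
  have hsplit : Y u - Y' u = (Y t' - y) + ∫ v in t'..u, (F (Y v) (α v) - F (Y' v) (α v)) := by
    rw [intervalIntegral.integral_sub (hY.intervalIntegrable hF hFM hα ht htu)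
      (hY'.intervalIntegrable hF hFM hα le_rfl hu.1), ← hY.sub_eq_integral hF hFM hα ht htu,
      hY' u]
    abel
  have hint : ‖∫ v in t'..u, (F (Y v) (α v) - F (Y' v) (α v))‖ ≤ ∫ v in t'..u, L * h v :=
    intervalIntegral.norm_integral_le_of_norm_le hu.1
      (ae_of_all _ fun v hv => hmax v hv.1.le ▸ hFL _ _ _ (hαA v))
      ((continuous_const.mul hh).intervalIntegrable _ _)
  rw [hmax u hu.1, hsplit, ← intervalIntegral.integral_const_mul]
  exact (norm_add_le _ _).trans (add_le_add_right hint _)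

lemma norm_sub_apply_max_le {A : Set U} {L : ℝ} (hL : 0 ≤ L)
    (hF : Continuous fun q : E × U => F q.1 q.2) (hFM : ∀ x a, ‖F x a‖ ≤ M)
    (hFL : ∀ x y a, a ∈ A → ‖F x a - F y a‖ ≤ L * ‖x - y‖)
    (hα : StronglyMeasurable α) (hαA : ∀ s, α s ∈ A)
    {y : E} {t' : ℝ} {Y' : ℝ → E} (hY : IsIntegralSolution F α x t Y)
    (hY' : IsIntegralSolution F α y t' Y') (ht : t ≤ t') {s : ℝ} (hs : t ≤ s) :
    ‖Y s - Y' (max s t')‖ ≤ (‖x - y‖ + M * (t' - t)) * exp (L * (max s t' - t')) := by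
  have hM : 0 ≤ M := (norm_nonneg _).trans (hFM x (α t))
  have hnear : ∀ u ∈ Icc t t', ‖Y u - y‖ ≤ ‖x - y‖ + M * (t' - t) := fun u hu => by
    calc ‖Y u - y‖ = ‖(Y u - Y t) + (x - y)‖ := by rw [hY.apply_self]; abel_nf
      _ ≤ M * |u - t| + ‖x - y‖ :=
        (norm_add_le _ _).trans (add_le_add_left (hY.norm_sub_le hF hFM hα le_rfl hu.1) _)
      _ ≤ ‖x - y‖ + M * (t' - t) := by
        rw [abs_of_nonneg (sub_nonneg.2 hu.1)]
        nlinarith [hu.2]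
  rcases le_total s t' with hst | hts
  · rw [max_eq_right hst, sub_self, mul_zero, exp_zero, mul_one, hY'.apply_self]
    exact hnear s ⟨hs, hst⟩
  · rw [max_eq_left hts]
    exact (hY.norm_sub_le_mul_exp hL hF hFM hFL hα hαA hY' ht hts).trans
      (by gcongr; exact hnear t' ⟨ht, le_rfl⟩)

lemma norm_sub_apply_max_lt {A : Set U} {L T δ : ℝ} (hL : 0 ≤ L)
    (hF : Continuous fun q : E × U => F q.1 q.2) (hFM : ∀ x a, ‖F x a‖ ≤ M)
    (hFL : ∀ x y a, a ∈ A → ‖F x a - F y a‖ ≤ L * ‖x - y‖)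
    (hα : StronglyMeasurable α) (hαA : ∀ s, α s ∈ A)
    {y : E} {t' : ℝ} {Y' : ℝ → E} (hY : IsIntegralSolution F α x t Y)
    (hY' : IsIntegralSolution F α y t' Y') (ht : t ≤ t') (ht' : t' ∈ Icc 0 T) {s : ℝ}
    (hs : s ∈ Icc t T) (hxy : ‖x - y‖ < δ) (hdt : t' - t < δ) :
    ‖Y s - Y' (max s t')‖ < δ * ((1 + M) * exp (L * T)) := by
  have hM : 0 ≤ M := (norm_nonneg _).trans (hFM x (α t))
  have hδ : 0 < δ := (norm_nonneg _).trans_lt hxy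
  refine (hY.norm_sub_apply_max_le hL hF hFM hFL hα hαA hY' ht hs.1).trans_lt ?_
  calc (‖x - y‖ + M * (t' - t)) * exp (L * (max s t' - t'))
      < δ * (1 + M) * exp (L * (max s t' - t')) := by gcongr; nlinarith
    _ ≤ δ * ((1 + M) * exp (L * T)) := by
      rw [mul_assoc]
      gcongr
      linarith [max_le hs.2 ht'.2, ht'.1]

end IsIntegralSolution

end Trajectory

lemma abs_exp_sub_exp_le_of_nonpos {a b : ℝ} (ha : a ≤ 0) (hb : b ≤ 0) :
    |exp a - exp b| ≤ |a - b| := by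
  wlog hab : a ≤ b generalizing a b
  · rw [abs_sub_comm, abs_sub_comm a]
    exact this hb ha (le_of_not_ge hab)
  have h1 : exp a = exp b * exp (a - b) := by rw [← exp_add, add_sub_cancel]
  have h2 := add_one_le_exp (a - b)
  have h3 : exp b ≤ 1 := exp_le_one_iff.2 hb
  rw [abs_of_nonpos (by linarith [exp_le_exp.2 hab]), abs_of_nonpos (by linarith)]
  nlinarith [exp_pos b]

lemma abs_exp_neg_mul_mul_le {lam u : ℝ} (hlam : 0 ≤ lam) (hu : 0 ≤ u) (X : ℝ) :
    |exp (-lam * u) * X| ≤ |X| := by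
  rw [abs_mul, abs_of_pos (exp_pos _)]
  exact mul_le_of_le_one_left (abs_nonneg X) (exp_le_one_iff.2 (by nlinarith))

lemma abs_exp_neg_mul_mul_sub_le {lam u v : ℝ} (hlam : 0 ≤ lam) (hu : 0 ≤ u) (hv : 0 ≤ v)
    (X₁ X₂ : ℝ) :
    |exp (-lam * u) * X₁ - exp (-lam * v) * X₂| ≤ lam * |u - v| * |X₁| + |X₁ - X₂| := by
  have he : |exp (-lam * u) - exp (-lam * v)| ≤ lam * |u - v| := by
    calc |exp (-lam * u) - exp (-lam * v)| ≤ |-lam * u - -lam * v| :=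
          abs_exp_sub_exp_le_of_nonpos (by nlinarith) (by nlinarith)
      _ = lam * |u - v| := by
        rw [show -lam * u - -lam * v = lam * (v - u) by ring, abs_mul, abs_of_nonneg hlam,
          abs_sub_comm]
  calc |exp (-lam * u) * X₁ - exp (-lam * v) * X₂|
      = |(exp (-lam * u) - exp (-lam * v)) * X₁ + exp (-lam * v) * (X₁ - X₂)| := by ring_nf
    _ ≤ lam * |u - v| * |X₁| + |X₁ - X₂| := by
      refine (abs_add_le _ _).trans (add_le_add ?_ (abs_exp_neg_mul_mul_le hlam hv _))
      rw [abs_mul]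
      exact mul_le_mul_of_nonneg_right he (abs_nonneg _)

lemma abs_integral_exp_neg_mul_le {lam K t a b : ℝ} {ρ : ℝ → ℝ} (hlam : 0 ≤ lam) (hta : t ≤ a)
    (hab : a ≤ b) (hρ : ∀ s, |ρ s| ≤ K) :
    |∫ s in a..b, exp (-lam * (s - t)) * ρ s| ≤ K * (b - a) := by
  have h := intervalIntegral.norm_integral_le_of_norm_le_const (C := K)
    (f := fun s => exp (-lam * (s - t)) * ρ s) (a := a) (b := b) fun s hs => by
      rw [uIoc_of_le hab] at hs
      exact (abs_exp_neg_mul_mul_le hlam (by linarith [hs.1]) _).trans (hρ s)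
  rwa [Real.norm_eq_abs, abs_of_nonneg (sub_nonneg.2 hab)] at h

lemma abs_integral_exp_neg_mul_sub_le {lam K η t t' τ : ℝ} {ρ₁ ρ₂ : ℝ → ℝ} (hlam : 0 ≤ lam)
    (htt' : t ≤ t') (htτ : t ≤ τ) (hρ₁ : ∀ s, |ρ₁ s| ≤ K)
    (hi₁ : IntervalIntegrable ρ₁ volume t τ)
    (hi₂ : IntervalIntegrable ρ₂ volume t' (max τ t'))
    (hclose : ∀ s ∈ Icc t' τ, |ρ₁ s - ρ₂ s| ≤ η) :
    |(∫ s in t..τ, exp (-lam * (s - t)) * ρ₁ s)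
        - ∫ s in t'..max τ t', exp (-lam * (s - t')) * ρ₂ s|
      ≤ K * (t' - t) + (lam * K * (t' - t) + η) * (max τ t' - t') := by
  have hK : 0 ≤ K := (abs_nonneg _).trans (hρ₁ t)
  rcases le_total τ t' with hτ | hτ
  · rw [max_eq_right hτ, intervalIntegral.integral_same, sub_zero, sub_self, mul_zero, add_zero]
    exact (abs_integral_exp_neg_mul_le hlam le_rfl htτ hρ₁).trans (by gcongr)
  rw [max_eq_left hτ] at hi₂ ⊢
  have hg₁ : IntervalIntegrable (fun s => exp (-lam * (s - t)) * ρ₁ s) volume t τ :=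
    hi₁.continuousOn_mul (by fun_prop)
  have hg₂ : IntervalIntegrable (fun s => exp (-lam * (s - t')) * ρ₂ s) volume t' τ :=
    hi₂.continuousOn_mul (by fun_prop)
  have hg₁' : IntervalIntegrable (fun s => exp (-lam * (s - t)) * ρ₁ s) volume t' τ :=
    hg₁.mono_set (uIcc_subset_uIcc (mem_uIcc_of_le htt' hτ) right_mem_uIcc)
  have hsplit : (∫ s in t..τ, exp (-lam * (s - t)) * ρ₁ s)
      - ∫ s in t'..τ, exp (-lam * (s - t')) * ρ₂ s
      = (∫ s in t..t', exp (-lam * (s - t)) * ρ₁ s)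
        + ∫ s in t'..τ, (exp (-lam * (s - t)) * ρ₁ s - exp (-lam * (s - t')) * ρ₂ s) := by
    rw [intervalIntegral.integral_sub hg₁' hg₂, ← intervalIntegral.integral_add_adjacent_intervals
      (hg₁.mono_set (uIcc_subset_uIcc left_mem_uIcc (mem_uIcc_of_le htt' hτ))) hg₁']
    ring
  have hdiff := intervalIntegral.norm_integral_le_of_norm_le_const (C := lam * K * (t' - t) + η)
    (f := fun s => exp (-lam * (s - t)) * ρ₁ s - exp (-lam * (s - t')) * ρ₂ s)
    (a := t') (b := τ) fun s hs => by
      rw [uIoc_of_le hτ] at hs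
      refine (abs_exp_neg_mul_mul_sub_le hlam (by linarith [hs.1]) (by linarith [hs.1]) _ _).trans
        (add_le_add ?_ (hclose s (Ioc_subset_Icc_self hs)))
      rw [show s - t - (s - t') = t' - t by ring, abs_of_nonneg (sub_nonneg.2 htt')]
      nlinarith [hρ₁ s, mul_nonneg hlam (sub_nonneg.2 htt')]
  rw [Real.norm_eq_abs, abs_of_nonneg (sub_nonneg.2 hτ)] at hdiff
  rw [hsplit]
  exact (abs_add_le _ _).trans (add_le_add (abs_integral_exp_neg_mul_le hlam le_rfl htt' hρ₁) hdiff)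

lemma intervalIntegrable_comp_of_continuousOn {E U : Type*} [NormedAddCommGroup E]
    [TopologicalSpace U] {r : E → U → ℝ → ℝ} {K t a b : ℝ}
    (hr : Continuous fun q : E × U × ℝ => r q.1 q.2.1 q.2.2) (hrb : ∀ x a s, |r x a s| ≤ K)
    {Y : ℝ → E} {α : ℝ → U} (hY : ContinuousOn Y (Ici t)) (hα : StronglyMeasurable α)
    (ha : t ≤ a) (hb : t ≤ b) :
    IntervalIntegrable (fun s => r (Y s) (α s) s) volume a b := by
  have hYm : AEStronglyMeasurable Y (volume.restrict (uIoc a b)) :=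
    (hY.mono fun s hs => (le_min ha hb).trans hs.1.le).aestronglyMeasurable measurableSet_uIoc
  exact (intervalIntegrable_const (c := K)).mono_fun'
    (hr.comp_aestronglyMeasurable (hYm.prodMk (hα.aestronglyMeasurable.prodMk
      aestronglyMeasurable_id)))
    (ae_of_all _ fun s => hrb _ _ _)

section StoppingCost

variable {E U ι : Type*}

/-- `ψ i` plays the role of `C(·, p, i) + V_i`: the cost of stopping at `τ` and switching to `i`. -/
def stopCost (lam : ℝ) (r : E → U → ℝ → ℝ) (ψ : ι → E → ℝ → ℝ) (Y : ℝ → E) (α : ℝ → U)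
    (t τ : ℝ) (i : ι) : ℝ :=
  (∫ s in t..τ, exp (-lam * (s - t)) * r (Y s) (α s) s) + exp (-lam * (τ - t)) * ψ i (Y τ) τ

variable {lam Kr Kψ t τ : ℝ} {r : E → U → ℝ → ℝ} {ψ : ι → E → ℝ → ℝ} {α : ℝ → U} {i : ι}

lemma abs_stopCost_le {Y : ℝ → E} (hlam : 0 ≤ lam) (hrb : ∀ x a s, |r x a s| ≤ Kr)
    (htτ : t ≤ τ) (hψ : |ψ i (Y τ) τ| ≤ Kψ) :
    |stopCost lam r ψ Y α t τ i| ≤ Kr * (τ - t) + Kψ :=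
  (abs_add_le _ _).trans
    (add_le_add (abs_integral_exp_neg_mul_le hlam le_rfl htτ fun _ => hrb _ _ _)
      ((abs_exp_neg_mul_mul_le hlam (sub_nonneg.2 htτ) _).trans hψ))

lemma abs_stopCost_sub_le {ηr ηψ t' : ℝ} {Y Y' : ℝ → E} (hlam : 0 ≤ lam)
    (htt' : t ≤ t') (htτ : t ≤ τ) (hrb : ∀ x a s, |r x a s| ≤ Kr)
    (hi : IntervalIntegrable (fun s => r (Y s) (α s) s) volume t τ)
    (hi' : IntervalIntegrable (fun s => r (Y' s) (α s) s) volume t' (max τ t'))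
    (hr : ∀ s ∈ Icc t' τ, |r (Y s) (α s) s - r (Y' s) (α s) s| ≤ ηr)
    (hψb : |ψ i (Y τ) τ| ≤ Kψ) (hψ : |ψ i (Y τ) τ - ψ i (Y' (max τ t')) (max τ t')| ≤ ηψ) :
    |stopCost lam r ψ Y α t τ i - stopCost lam r ψ Y' α t' (max τ t') i|
      ≤ Kr * (t' - t) + (lam * Kr * (t' - t) + ηr) * (max τ t' - t')
        + (lam * (t' - t) * Kψ + ηψ) := by
  have hshift : |τ - t - (max τ t' - t')| ≤ t' - t := by
    rcases le_total τ t' with h | h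
    · rw [max_eq_right h, abs_le]; constructor <;> linarith
    · rw [max_eq_left h, abs_le]; constructor <;> linarith
  have hterm := abs_exp_neg_mul_mul_sub_le hlam (sub_nonneg.2 htτ)
    (sub_nonneg.2 (le_max_right τ t')) (ψ i (Y τ) τ) (ψ i (Y' (max τ t')) (max τ t'))
  rw [stopCost, stopCost, add_sub_add_comm]
  refine (abs_add_le _ _).trans (add_le_add (abs_integral_exp_neg_mul_sub_le hlam htt' htτ
    (fun s => hrb _ _ s) hi hi' hr) (hterm.trans (add_le_add ?_ hψ)))
  gcongr

end StoppingCost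

lemma abs_csInf_le {S : Set ℝ} {K : ℝ} (hS : S.Nonempty) (h : ∀ c ∈ S, |c| ≤ K) :
    |sInf S| ≤ K := by
  obtain ⟨c, hc⟩ := hS
  exact abs_le.2 ⟨le_csInf ⟨c, hc⟩ fun c' hc' => (abs_le.1 (h c' hc')).1,
    (csInf_le ⟨-K, fun c' hc' => (abs_le.1 (h c' hc')).1⟩ hc).trans (abs_le.1 (h c hc)).2⟩

lemma csInf_le_csInf_add {S S' : Set ℝ} {η : ℝ} (hS : S.Nonempty) (hS' : BddBelow S')
    (h : ∀ c ∈ S, ∃ c' ∈ S', c' ≤ c + η) : sInf S' ≤ sInf S + η := by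
  have : sInf S' - η ≤ sInf S := le_csInf hS fun c hc => by
    obtain ⟨c', hc', hle⟩ := h c hc
    linarith [csInf_le hS' hc']
  linarith

lemma exists_pos_of_eventually_nhds_zero {p : ℝ → Prop} (h : ∀ᶠ δ in 𝓝 (0 : ℝ), p δ) :
    ∃ δ > 0, p δ :=
  ((h.filter_mono nhdsWithin_le_nhds).and (self_mem_nhdsWithin (s := Ioi 0))).exists.imp
    fun _ h => ⟨h.2, h.1⟩

lemma eventually_mul_lt (c : ℝ) {u : ℝ} (hu : 0 < u) : ∀ᶠ δ in 𝓝 (0 : ℝ), δ * c < u :=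
  ((continuous_mul_const c).tendsto' 0 0 (zero_mul c)).eventually (gt_mem_nhds hu)

section ValueFunction

variable {d m : ℕ} {T : ℝ}

lemma BUCOn.add {u v : EuclideanSpace ℝ (Fin d) → ℝ → ℝ} (hu : BUCOn u T) (hv : BUCOn v T) :
    BUCOn (fun x t => u x t + v x t) T := by
  obtain ⟨⟨K, hK⟩, hu⟩ := hu
  obtain ⟨⟨K', hK'⟩, hv⟩ := hv
  exact ⟨⟨K + K', fun x t ht => (abs_add_le _ _).trans (add_le_add (hK x t ht) (hK' x t ht))⟩,
    uniformContinuousOn_iff_restrict.2 ((uniformContinuousOn_iff_restrict.1 hu).add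
      (uniformContinuousOn_iff_restrict.1 hv))⟩

lemma bucOn_of_uniformContinuous {g : EuclideanSpace ℝ (Fin d) → ℝ} {K : ℝ}
    (hb : ∀ x, |g x| ≤ K) (hg : UniformContinuous g) : BUCOn (fun x _ => g x) T :=
  ⟨⟨K, fun x _ _ => hb x⟩, (hg.comp uniformContinuous_fst).uniformContinuousOn⟩

variable {ι : Type*} {ψ : ι → EuclideanSpace ℝ (Fin d) → ℝ → ℝ} {I : Set ι}

lemma BUCOn.exists_forall_abs_le_of_finite (hI : I.Finite) (h : ∀ i ∈ I, BUCOn (ψ i) T) :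
    ∃ K, ∀ i ∈ I, ∀ x t, t ∈ Icc 0 T → |ψ i x t| ≤ K :=
  ((eventually_all_finite hI).2 fun i hi => by
    obtain ⟨K, hK⟩ := (h i hi).1
    filter_upwards [eventually_ge_atTop K] with K' hK' x t ht using (hK x t ht).trans hK').exists

lemma BUCOn.exists_forall_dist_lt_of_finite (hI : I.Finite) (h : ∀ i ∈ I, BUCOn (ψ i) T) :
    ∀ ε > 0, ∃ δ > 0, ∀ i ∈ I, ∀ q ∈ univ ×ˢ Icc 0 T, ∀ q' ∈ univ ×ˢ Icc 0 T,
      dist q q' < δ → dist (ψ i q.1 q.2) (ψ i q'.1 q'.2) < ε := by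
  intro ε hε
  refine exists_pos_of_eventually_nhds_zero ((eventually_all_finite hI).2 fun i hi => ?_)
  obtain ⟨δ, hδ, hψ⟩ := Metric.uniformContinuousOn_iff.1 (h i hi).2 ε hε
  filter_upwards [Iio_mem_nhds hδ] with δ' hδ' q hq q' hq' hd using
    hψ q hq q' hq' (hd.trans hδ')

variable {lam M L Kr : ℝ} {A : Set (EuclideanSpace ℝ (Fin m))}
  {F : EuclideanSpace ℝ (Fin d) → EuclideanSpace ℝ (Fin m) → EuclideanSpace ℝ (Fin d)}
  {r : EuclideanSpace ℝ (Fin d) → EuclideanSpace ℝ (Fin m) → ℝ → ℝ}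
  {Y : EuclideanSpace ℝ (Fin d) → ℝ → (ℝ → EuclideanSpace ℝ (Fin m)) → ℝ →
    EuclideanSpace ℝ (Fin d)}

def stopCosts (lam T : ℝ) (A : Set (EuclideanSpace ℝ (Fin m)))
    (r : EuclideanSpace ℝ (Fin d) → EuclideanSpace ℝ (Fin m) → ℝ → ℝ)
    (ψ : ι → EuclideanSpace ℝ (Fin d) → ℝ → ℝ) (I : Set ι)
    (Y : EuclideanSpace ℝ (Fin d) → ℝ → (ℝ → EuclideanSpace ℝ (Fin m)) → ℝ →
      EuclideanSpace ℝ (Fin d))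
    (x : EuclideanSpace ℝ (Fin d)) (t : ℝ) : Set ℝ :=
  {c | ∃ α ∈ Ctrl A, ∃ τ ∈ Icc t T, ∃ i ∈ I, c = stopCost lam r ψ (Y x t α) α t τ i}

lemma abs_le_of_mem_stopCosts {Kψ c t : ℝ} {x : EuclideanSpace ℝ (Fin d)} (hlam : 0 ≤ lam)
    (hrb : ∀ x a s, |r x a s| ≤ Kr) (hψb : ∀ i ∈ I, ∀ x t, t ∈ Icc 0 T → |ψ i x t| ≤ Kψ)
    (ht : t ∈ Icc 0 T) (hc : c ∈ stopCosts lam T A r ψ I Y x t) : |c| ≤ Kr * T + Kψ := by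
  obtain ⟨α, -, τ, hτ, i, hi, rfl⟩ := hc
  refine (abs_stopCost_le hlam hrb hτ.1 (hψb i hi _ τ ⟨ht.1.trans hτ.1, hτ.2⟩)).trans ?_
  have hKr : 0 ≤ Kr := (abs_nonneg _).trans (hrb 0 0 0)
  gcongr
  linarith [ht.1, hτ.2]

lemma stopCosts_nonempty {t : ℝ} {x : EuclideanSpace ℝ (Fin d)} (hA : A.Nonempty)
    (hI : I.Nonempty) (ht : t ≤ T) : (stopCosts lam T A r ψ I Y x t).Nonempty := by
  obtain ⟨a, ha⟩ := hA
  obtain ⟨i, hi⟩ := hI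
  exact ⟨_, fun _ => a, ⟨measurable_const, fun _ => ha⟩, t, ⟨le_rfl, ht⟩, i, hi, rfl⟩

theorem exists_forall_abs_stopCost_sub_lt {Kψ : ℝ} (hlam : 0 ≤ lam) (hL : 0 ≤ L)
    (hF : Continuous fun q : EuclideanSpace ℝ (Fin d) × EuclideanSpace ℝ (Fin m) => F q.1 q.2)
    (hFM : ∀ x a, ‖F x a‖ ≤ M) (hFL : ∀ x y a, a ∈ A → ‖F x a - F y a‖ ≤ L * ‖x - y‖)
    (hr : Continuous fun q : EuclideanSpace ℝ (Fin d) × EuclideanSpace ℝ (Fin m) × ℝ =>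
      r q.1 q.2.1 q.2.2)
    (hrb : ∀ x a s, |r x a s| ≤ Kr)
    (hruc : ∀ ε > 0, ∃ δ > 0, ∀ x y a s, ‖x - y‖ < δ → |r x a s - r y a s| < ε)
    (hψb : ∀ i ∈ I, ∀ x t, t ∈ Icc 0 T → |ψ i x t| ≤ Kψ)
    (hψ : ∀ ε > 0, ∃ δ > 0, ∀ i ∈ I, ∀ q ∈ univ ×ˢ Icc 0 T, ∀ q' ∈ univ ×ˢ Icc 0 T,
      dist q q' < δ → dist (ψ i q.1 q.2) (ψ i q'.1 q'.2) < ε)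
    (hY : ∀ x t α, IsIntegralSolution F α x t (Y x t α)) :
    ∀ ε > 0, ∃ δ > 0, ∀ x y t t', t ∈ Icc 0 T → t' ∈ Icc 0 T → t ≤ t' → ‖x - y‖ < δ →
      t' - t < δ → ∀ α ∈ Ctrl A, ∀ τ ∈ Icc t T, ∀ i ∈ I,
        |stopCost lam r ψ (Y x t α) α t τ i - stopCost lam r ψ (Y y t' α) α t' (max τ t') i|
          < ε := by
  intro ε hε
  have hε4 : 0 < ε / 4 := by positivity
  obtain ⟨η, hη, hηT⟩ := exists_pos_of_eventually_nhds_zero (eventually_mul_lt T hε4)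
  obtain ⟨δr, hδr, hr'⟩ := hruc η hη
  obtain ⟨δψ, hδψ, hψ'⟩ := hψ (ε / 4) hε4
  obtain ⟨δ, hδ, hδc, hδcψ, hδψ', hδε⟩ := exists_pos_of_eventually_nhds_zero
    ((eventually_mul_lt ((1 + M) * exp (L * T)) hδr).and
      ((eventually_mul_lt ((1 + M) * exp (L * T)) hδψ).and ((eventually_mul_lt 1 hδψ).and
      (eventually_mul_lt (Kr + lam * Kr * T + lam * Kψ) hε4))))
  refine ⟨δ, hδ, fun x y t t' ht ht' htt' hxy hdt α hα τ hτ i hi => ?_⟩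
  have hαm := hα.1.stronglyMeasurable
  have hclose : ∀ s ∈ Icc t T, ‖Y x t α s - Y y t' α (max s t')‖ <
      δ * ((1 + M) * exp (L * T)) := fun s hs =>
    (hY x t α).norm_sub_apply_max_lt hL hF hFM hFL hαm hα.2 (hY y t' α) htt' ht' hs hxy hdt
  have hτ' : max τ t' ∈ Icc 0 T := ⟨ht'.1.trans (le_max_right _ _), max_le hτ.2 ht'.2⟩
  have hτ₀ : τ ∈ Icc 0 T := ⟨ht.1.trans hτ.1, hτ.2⟩
  have hψτ : |ψ i (Y x t α τ) τ - ψ i (Y y t' α (max τ t')) (max τ t')| ≤ ε / 4 := by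
    refine (hψ' i hi (_, τ) ⟨trivial, hτ₀⟩ (_, max τ t') ⟨trivial, hτ'⟩ ?_).le
    have hmax : max τ t' ≤ τ + (t' - t) := max_le (by linarith) (by linarith [hτ.1])
    rw [Prod.dist_eq, max_lt_iff, dist_eq_norm, Real.dist_eq, abs_sub_lt_iff]
    exact ⟨(hclose τ hτ).trans hδcψ, by linarith [le_max_left τ t'], by linarith⟩
  have hcost := abs_stopCost_sub_le (ηr := η) (ηψ := ε / 4) hlam htt' hτ.1 hrb
    (intervalIntegrable_comp_of_continuousOn hr hrb ((hY x t α).continuousOn hF hFM hαm)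
      hαm le_rfl hτ.1)
    (intervalIntegrable_comp_of_continuousOn hr hrb ((hY y t' α).continuousOn hF hFM hαm)
      hαm le_rfl (le_max_right τ t'))
    (fun s hs => (hr' _ _ _ _ (by simpa [max_eq_left hs.1] using
      (hclose s ⟨htt'.trans hs.1, hs.2.trans hτ.2⟩).trans hδc)).le)
    (hψb i hi _ τ hτ₀) hψτ
  have hKr : 0 ≤ Kr := (abs_nonneg _).trans (hrb 0 0 0)
  have hKψ : 0 ≤ Kψ := (abs_nonneg _).trans (hψb i hi x τ hτ₀)
  have hW : 0 ≤ max τ t' - t' := sub_nonneg.2 (le_max_right _ _)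
  have hWT : max τ t' - t' ≤ T := by linarith [hτ'.2, ht'.1]
  have hDW : (t' - t) * (max τ t' - t') ≤ δ * T := mul_le_mul hdt.le hWT hW hδ.le
  nlinarith [mul_le_mul_of_nonneg_left hDW (mul_nonneg hlam hKr),
    mul_le_mul_of_nonneg_left hWT hη.le, mul_le_mul_of_nonneg_left hdt.le hKr,
    mul_le_mul_of_nonneg_left hdt.le (mul_nonneg hlam hKψ)]

theorem exists_forall_abs_sInf_stopCosts_sub_le (hlam : 0 ≤ lam) (hL : 0 ≤ L)
    (hA : A.Nonempty)
    (hF : Continuous fun q : EuclideanSpace ℝ (Fin d) × EuclideanSpace ℝ (Fin m) => F q.1 q.2)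
    (hFM : ∀ x a, ‖F x a‖ ≤ M) (hFL : ∀ x y a, a ∈ A → ‖F x a - F y a‖ ≤ L * ‖x - y‖)
    (hr : Continuous fun q : EuclideanSpace ℝ (Fin d) × EuclideanSpace ℝ (Fin m) × ℝ =>
      r q.1 q.2.1 q.2.2)
    (hrb : ∀ x a s, |r x a s| ≤ Kr)
    (hruc : ∀ ε > 0, ∃ δ > 0, ∀ x y a s, ‖x - y‖ < δ → |r x a s - r y a s| < ε)
    (hI : I.Finite) (hIne : I.Nonempty) (hψ : ∀ i ∈ I, BUCOn (ψ i) T)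
    (hY : ∀ x t α, IsIntegralSolution F α x t (Y x t α)) :
    ∀ ε > 0, ∃ δ > 0, ∀ x y t t', t ∈ Icc 0 T → t' ∈ Icc 0 T → t ≤ t' → ‖x - y‖ < δ →
      t' - t < δ →
        |sInf (stopCosts lam T A r ψ I Y x t) - sInf (stopCosts lam T A r ψ I Y y t')| ≤ ε := by
  intro ε hε
  obtain ⟨Kψ, hKψ⟩ := BUCOn.exists_forall_abs_le_of_finite hI hψ
  obtain ⟨δ, hδ, hkey⟩ := exists_forall_abs_stopCost_sub_lt hlam hL hF hFM hFL hr hrb hruc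
    hKψ (BUCOn.exists_forall_dist_lt_of_finite hI hψ) hY ε hε
  have hbdd : ∀ x t, t ∈ Icc 0 T → BddBelow (stopCosts lam T A r ψ I Y x t) := fun x t ht =>
    ⟨-(Kr * T + Kψ), fun c hc => neg_le_of_abs_le (abs_le_of_mem_stopCosts hlam hrb hKψ ht hc)⟩
  refine ⟨δ, hδ, fun x y t t' ht ht' htt' hxy hdt => abs_sub_le_iff.2 ⟨?_, ?_⟩⟩
  · refine sub_le_iff_le_add'.2 (csInf_le_csInf_add (stopCosts_nonempty hA hIne ht'.2)
      (hbdd x t ht) ?_)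
    rintro _ ⟨α, hα, τ, hτ, i, hi, rfl⟩
    have hτ' : τ ∈ Icc t T := ⟨htt'.trans hτ.1, hτ.2⟩
    refine ⟨_, ⟨α, hα, τ, hτ', i, hi, rfl⟩, ?_⟩
    have := hkey x y t t' ht ht' htt' hxy hdt α hα τ hτ' i hi
    rw [max_eq_left hτ.1] at this
    linarith [(abs_lt.1 this).2]
  · refine sub_le_iff_le_add'.2 (csInf_le_csInf_add (stopCosts_nonempty hA hIne ht.2)
      (hbdd y t' ht') ?_)
    rintro _ ⟨α, hα, τ, hτ, i, hi, rfl⟩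
    refine ⟨_, ⟨α, hα, max τ t', ⟨le_max_right _ _, max_le hτ.2 ht'.2⟩, i, hi, rfl⟩, ?_⟩
    linarith [(abs_lt.1 (hkey x y t t' ht ht' htt' hxy hdt α hα τ hτ i hi)).1]

theorem BUCOn.sInf_stopCosts (hlam : 0 ≤ lam) (hL : 0 ≤ L) (hA : A.Nonempty)
    (hF : Continuous fun q : EuclideanSpace ℝ (Fin d) × EuclideanSpace ℝ (Fin m) => F q.1 q.2)
    (hFM : ∀ x a, ‖F x a‖ ≤ M) (hFL : ∀ x y a, a ∈ A → ‖F x a - F y a‖ ≤ L * ‖x - y‖)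
    (hr : Continuous fun q : EuclideanSpace ℝ (Fin d) × EuclideanSpace ℝ (Fin m) × ℝ =>
      r q.1 q.2.1 q.2.2)
    (hrb : ∀ x a s, |r x a s| ≤ Kr)
    (hruc : ∀ ε > 0, ∃ δ > 0, ∀ x y a s, ‖x - y‖ < δ → |r x a s - r y a s| < ε)
    (hI : I.Finite) (hIne : I.Nonempty) (hψ : ∀ i ∈ I, BUCOn (ψ i) T)
    (hY : ∀ x t α, IsIntegralSolution F α x t (Y x t α)) :
    BUCOn (fun x t => sInf (stopCosts lam T A r ψ I Y x t)) T := by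
  obtain ⟨Kψ, hKψ⟩ := BUCOn.exists_forall_abs_le_of_finite hI hψ
  refine ⟨⟨_, fun x t ht => abs_csInf_le (stopCosts_nonempty hA hIne ht.2)
    fun c hc => abs_le_of_mem_stopCosts hlam hrb hKψ ht hc⟩,
    Metric.uniformContinuousOn_iff.2 fun ε hε => ?_⟩
  obtain ⟨δ, hδ, h⟩ := exists_forall_abs_sInf_stopCosts_sub_le hlam hL hA hF hFM hFL hr hrb hruc
    hI hIne hψ hY (ε / 2) (half_pos hε)
  refine ⟨δ, hδ, ?_⟩
  rintro ⟨x, t⟩ ⟨-, ht : t ∈ Icc 0 T⟩ ⟨y, t'⟩ ⟨-, ht' : t' ∈ Icc 0 T⟩ hd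
  rw [Prod.dist_eq, max_lt_iff, dist_eq_norm, Real.dist_eq, abs_sub_lt_iff] at hd
  dsimp only at hd
  rw [Real.dist_eq]
  rcases le_total t t' with htt | htt
  · exact (h x y t t' ht ht' htt hd.1 (by linarith [hd.2.2])).trans_lt (half_lt_self hε)
  · rw [abs_sub_comm]
    exact (h y x t' t ht' ht htt (by rw [norm_sub_rev]; exact hd.1)
      (by linarith [hd.2.1])).trans_lt (half_lt_self hε)

end ValueFunction

lemma lt_of_mem_switchSet {N : ℕ} {p q : Fin N → Bool} (h : q ∈ SwitchSet p) : p < q := by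
  obtain ⟨hpq, l, hpl, hql⟩ := h
  refine lt_of_le_of_ne (fun i => ?_) fun hpq' => by simp [hpq', hql] at hpl
  cases hpi : p i
  · exact Bool.false_le _
  · simp [hpq i hpi]

lemma switchSet_nonempty {N : ℕ} {p : Fin N → Bool} (hp : p ≠ fun _ => true) :
    (SwitchSet p).Nonempty := by
  obtain ⟨l, hl⟩ : ∃ l, p l = false := by
    by_contra! h
    exact hp (funext fun i => by simpa using h i)
  refine ⟨Function.update p l true, fun i hi => ?_, l, hl, by simp⟩
  rcases eq_or_ne i l with rfl | hil
  · simp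
  · simpa [Function.update_of_ne hil] using hi

theorem stmt12_general
    {d m N : ℕ} (T lam : ℝ) (hlam : 0 ≤ lam)
    (A : Set (EuclideanSpace ℝ (Fin m))) (hAne : A.Nonempty)
    (f : EuclideanSpace ℝ (Fin d) → EuclideanSpace ℝ (Fin m) → (Fin N → Bool) →
      EuclideanSpace ℝ (Fin d))
    (hfc : ∀ p, Continuous fun q : EuclideanSpace ℝ (Fin d) × EuclideanSpace ℝ (Fin m) =>
      f q.1 q.2 p)
    (M : ℝ) (hfM : ∀ x a p, ‖f x a p‖ ≤ M)
    (L : ℝ) (hfLip : ∀ x y a p, a ∈ A → ‖f x a p - f y a p‖ ≤ L * ‖x - y‖)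
    (ℓ : EuclideanSpace ℝ (Fin d) → EuclideanSpace ℝ (Fin m) → (Fin N → Bool) → ℝ → ℝ)
    (hℓ0 : ∀ x a p s, 0 ≤ ℓ x a p s) (hℓb : ∃ K, ∀ x a p s, ℓ x a p s ≤ K)
    (hℓc : ∀ p, Continuous fun q : EuclideanSpace ℝ (Fin d) × EuclideanSpace ℝ (Fin m) × ℝ =>
      ℓ q.1 q.2.1 p q.2.2)
    (hℓuc : ∀ ε > 0, ∃ δ > 0, ∀ x y a p s, ‖x - y‖ < δ → |ℓ x a p s - ℓ y a p s| < ε)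
    (C : EuclideanSpace ℝ (Fin d) → (Fin N → Bool) → (Fin N → Bool) → ℝ)
    (hC0 : ∀ x p p', 0 ≤ C x p p') (hCb : ∃ K, ∀ x p p', C x p p' ≤ K)
    (hCuc : ∀ ε > 0, ∃ δ > 0, ∀ x y p p', ‖x - y‖ < δ → |C x p p' - C y p p'| < ε)
    (Y : (Fin N → Bool) → EuclideanSpace ℝ (Fin d) → ℝ → (ℝ → EuclideanSpace ℝ (Fin m)) →
      ℝ → EuclideanSpace ℝ (Fin d))
    (hY : ∀ p x t α s, Y p x t α s = x + ∫ ζ in t..s, f (Y p x t α ζ) (α ζ) p)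
    (Vfam : (Fin N → Bool) → EuclideanSpace ℝ (Fin d) → ℝ → ℝ)
    (hVbar : ∀ x t, Vfam (fun _ => true) x t = 0)
    (hVfam : ∀ p : Fin N → Bool, p ≠ (fun _ => true) → ∀ x t, Vfam p x t =
      sInf {c | ∃ α ∈ Ctrl A, ∃ τ ∈ Icc t T, ∃ p' ∈ SwitchSet p,
        c = (∫ s in t..τ, Real.exp (-lam * (s - t)) * ℓ (Y p x t α s) (α s) p s)
          + Real.exp (-lam * (τ - t)) *
              (C (Y p x t α τ) p p' + Vfam p' (Y p x t α τ) τ)})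
    : ∀ p, BUCOn (Vfam p) T := by
  obtain ⟨Kℓ, hKℓ⟩ := hℓb
  obtain ⟨KC, hKC⟩ := hCb
  have hC : ∀ p q, BUCOn (fun x (_ : ℝ) => C x p q) T := fun p q =>
    bucOn_of_uniformContinuous (fun x => (abs_of_nonneg (hC0 x p q)).trans_le (hKC x p q))
      (Metric.uniformContinuous_iff.2 fun ε hε => (hCuc ε hε).imp fun δ ⟨hδ, h⟩ =>
        ⟨hδ, fun {x y} hxy => by
          simpa only [Real.dist_eq] using h x y p q (dist_eq_norm x y ▸ hxy)⟩)
  intro p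
  induction p using WellFoundedGT.induction with
  | _ p ih =>
    by_cases hp : p = fun _ => true
    · rw [hp, show Vfam (fun _ => true) = fun _ _ => 0 from funext₂ hVbar]
      exact bucOn_of_uniformContinuous (K := 0) (by simp) uniformContinuous_const
    rw [show Vfam p = _ from funext₂ (hVfam p hp)]
    exact BUCOn.sInf_stopCosts (F := fun x a => f x a p) (r := fun x a s => ℓ x a p s)
      (ψ := fun q x τ => C x p q + Vfam q x τ) (Y := Y p) hlam (le_max_right L 0)
      hAne (hfc p) (fun x a => hfM x a p)
      (fun x y a ha => (hfLip x y a p ha).trans (by gcongr; exact le_max_left L 0))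
      (hℓc p) (fun x a s => (abs_of_nonneg (hℓ0 x a p s)).trans_le (hKℓ x a p s))
      (fun ε hε => (hℓuc ε hε).imp fun δ ⟨hδ, h⟩ => ⟨hδ, fun x y a s => h x y a p s⟩)
      (toFinite _) (switchSet_nonempty hp)
      (fun q hq => (hC p q).add (ih q (lt_of_mem_switchSet hq))) (hY p)

/-- The backwardly-defined value functions V_p of the family of
time-dependent optimal stopping problems are bounded and uniformly continuous on
ℝ^d × [0,T] for every p ∈ ℐ. -/
theorem stmt12
    {d m N : ℕ} (T lam : ℝ) (hT : 0 < T) (hlam : 0 ≤ lam)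
    (A : Set (EuclideanSpace ℝ (Fin m))) (hA : IsCompact A) (hAne : A.Nonempty)
    (f : EuclideanSpace ℝ (Fin d) → EuclideanSpace ℝ (Fin m) → (Fin N → Bool) →
      EuclideanSpace ℝ (Fin d))
    (hfc : ∀ p, Continuous fun q : EuclideanSpace ℝ (Fin d) × EuclideanSpace ℝ (Fin m) =>
      f q.1 q.2 p)
    (M : ℝ) (hfM : ∀ x a p, ‖f x a p‖ ≤ M)
    (L : ℝ) (hfLip : ∀ x y a p, a ∈ A → ‖f x a p - f y a p‖ ≤ L * ‖x - y‖)
    (ℓ : EuclideanSpace ℝ (Fin d) → EuclideanSpace ℝ (Fin m) → (Fin N → Bool) → ℝ → ℝ)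
    (hℓ0 : ∀ x a p s, 0 ≤ ℓ x a p s) (hℓb : ∃ K, ∀ x a p s, ℓ x a p s ≤ K)
    (hℓc : ∀ p, Continuous fun q : EuclideanSpace ℝ (Fin d) × EuclideanSpace ℝ (Fin m) × ℝ =>
      ℓ q.1 q.2.1 p q.2.2)
    (hℓuc : ∀ ε > 0, ∃ δ > 0, ∀ x y a p s, ‖x - y‖ < δ → |ℓ x a p s - ℓ y a p s| < ε)
    (C : EuclideanSpace ℝ (Fin d) → (Fin N → Bool) → (Fin N → Bool) → ℝ)
    (hC0 : ∀ x p p', 0 ≤ C x p p') (hCb : ∃ K, ∀ x p p', C x p p' ≤ K)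
    (hCuc : ∀ ε > 0, ∃ δ > 0, ∀ x y p p', ‖x - y‖ < δ → |C x p p' - C y p p'| < ε)
    (Y : (Fin N → Bool) → EuclideanSpace ℝ (Fin d) → ℝ → (ℝ → EuclideanSpace ℝ (Fin m)) →
      ℝ → EuclideanSpace ℝ (Fin d))
    (hY : ∀ p x t α s, Y p x t α s = x + ∫ ζ in t..s, f (Y p x t α ζ) (α ζ) p)
    (Vfam : (Fin N → Bool) → EuclideanSpace ℝ (Fin d) → ℝ → ℝ)
    (hVbar : ∀ x t, Vfam (fun _ => true) x t = 0)
    (hVfam : ∀ p : Fin N → Bool, p ≠ (fun _ => true) → ∀ x t, Vfam p x t =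
      sInf {c | ∃ α ∈ Ctrl A, ∃ τ ∈ Icc t T, ∃ p' ∈ SwitchSet p,
        c = (∫ s in t..τ, Real.exp (-lam * (s - t)) * ℓ (Y p x t α s) (α s) p s)
          + Real.exp (-lam * (τ - t)) *
              (C (Y p x t α τ) p p' + Vfam p' (Y p x t α τ) τ)})
    : ∀ p, BUCOn (Vfam p) T :=
  stmt12_general T lam hlam A hAne f hfc M hfM L hfLip ℓ hℓ0 hℓb hℓc hℓuc C hC0 hCb hCuc Y hY Vfam
    hVbar hVfam

end
end
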